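/- arXiv:1502.03849 — 2 statements merged into one kernel-verified Lean document; each statement's English description precedes it below -/
import Mathlib

section
/- There is a universal constant C > 0 such that for every number of agents n, every profile u of unit-sum valuations, and every coarse correlated equilibrium q of Probabilistic Serial at u, SW_OPT(u) ≤ C·√n·E_{s∼q}[SW_PS(u,s)]; i.e., the coarse correlated Price of Anarchy of Probabilistic Serial is O(√n). -/
/-- A unit-sum valuation over `n` items. -/
def UnitSum {n : ℕ} (v : Fin n → ℝ) : Prop :=
  (∀ j, 0 ≤ v j) ∧ ∑ j, v j = 1

/-- A unit-range valuation over `n` items. -/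
def UnitRange {n : ℕ} (v : Fin n → ℝ) : Prop :=
  (∀ j, 0 ≤ v j ∧ v j ≤ 1) ∧ (∃ j, v j = 1) ∧ (∃ j, v j = 0)

/-- The optimal social welfare: the maximum over matchings (permutations of the
items) of the total utility. -/
noncomputable def SWopt {n : ℕ} (u : Fin n → Fin n → ℝ) : ℝ :=
  Finset.univ.sup' ⟨Equiv.refl (Fin n), Finset.mem_univ _⟩
    (fun μ : Equiv.Perm (Fin n) => ∑ i, u i (μ i))
/-- The state of the Probabilistic Serial eating process: `rem j` is the remaining
amount of item `j`, `cons i j` the amount of item `j` eaten so far by agent `i`,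
`time` the current time, and `fin j` the time at which item `j` was fully consumed. -/
structure PSState (n : ℕ) where
  rem : Fin n → ℝ
  cons : Fin n → Fin n → ℝ
  time : ℝ
  fin : Fin n → ℝ

open Classical in
/-- One phase of the Probabilistic Serial eating process: while some item remains,
every agent eats at rate 1 from her most preferred remaining item (preference
orderings are given as bijections from ranks to items, rank `0` being the most
preferred); the phase lasts until the first moment a currently eaten item is
exhausted. -/
noncomputable def psStep {n : ℕ} (s : Fin n → (Fin n ≃ Fin n)) (st : PSState n) :
    PSState n :=
  let avail : Finset (Fin n) := Finset.univ.filter (fun j => 0 < st.rem j)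
  if h : avail.Nonempty then
    -- the most preferred still-available item of each agent
    let top : Fin n → Fin n := fun i =>
      let R : Finset (Fin n) := Finset.univ.filter (fun r => s i r ∈ avail)
      if hR : R.Nonempty then s i (R.min' hR) else h.choose
    -- the number of agents currently eating item `j`
    let rate : Fin n → ℕ := fun j => (Finset.univ.filter (fun i => top i = j)).card
    -- the duration of the phase: first time an eaten item is exhausted
    let Δ : ℝ := sInf {x : ℝ | ∃ j ∈ avail, 0 < rate j ∧ x = st.rem j / (rate j : ℝ)}
    { rem := fun j => st.rem j - (rate j : ℝ) * Δ
      cons := fun i j => st.cons i j + (if top i = j then Δ else 0)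
      time := st.time + Δ
      fin := fun j =>
        if 0 < st.rem j ∧ st.rem j - (rate j : ℝ) * Δ ≤ 0 then st.time + Δ else st.fin j }
  else st

/-- The final state of the Probabilistic Serial eating process (there are at most
`n` phases, since in each phase at least one item is exhausted). -/
noncomputable def psFinal {n : ℕ} (s : Fin n → (Fin n ≃ Fin n)) : PSState n :=
  (psStep s)^[n] ⟨fun _ => 1, fun _ _ => 0, 0, fun _ => 1⟩

/-- `psProb s i j` is the probability that agent `i` receives item `j` under
Probabilistic Serial at report profile `s`, i.e. the amount of item `j` eaten by
agent `i`. -/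
noncomputable def psProb {n : ℕ} (s : Fin n → (Fin n ≃ Fin n)) (i j : Fin n) : ℝ :=
  (psFinal s).cons i j

/-- `psTime s j` is the time at which item `j` is fully consumed under
Probabilistic Serial at report profile `s`. -/
noncomputable def psTime {n : ℕ} (s : Fin n → (Fin n ≃ Fin n)) (j : Fin n) : ℝ :=
  (psFinal s).fin j

/-- The expected social welfare of Probabilistic Serial at report profile `s`
under true valuation profile `u`. -/
noncomputable def psSW {n : ℕ} (u : Fin n → Fin n → ℝ) (s : Fin n → (Fin n ≃ Fin n)) : ℝ :=
  ∑ i, ∑ j, psProb s i j * u i j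

/-- `s` is a pure Nash equilibrium of Probabilistic Serial at true valuation
profile `u`: no agent can strictly increase her expected utility by unilaterally
reporting a different ordering. -/
def PSNash {n : ℕ} (u : Fin n → Fin n → ℝ) (s : Fin n → (Fin n ≃ Fin n)) : Prop :=
  ∀ (i : Fin n) (s' : Fin n ≃ Fin n),
    ∑ j, psProb (Function.update s i s') i j * u i j ≤ ∑ j, psProb s i j * u i j

/-- A coarse correlated equilibrium of Probabilistic Serial at true valuation
profile `u`: a distribution `q` over profiles of reported orderings such that no
agent can increase her expected utility by unilaterally committing to a fixed
ordering. -/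
def PSCCE {n : ℕ} (u : Fin n → Fin n → ℝ) (q : (Fin n → (Fin n ≃ Fin n)) → ℝ) : Prop :=
  (∀ sp, 0 ≤ q sp) ∧ (∑ sp, q sp = 1) ∧
    ∀ (i : Fin n) (s' : Fin n ≃ Fin n),
      ∑ sp, q sp * ∑ j, psProb (Function.update sp i s') i j * u i j ≤
        ∑ sp, q sp * ∑ j, psProb sp i j * u i j

/-!
Think of Probabilistic Serial in continuous time: agent `i` eats item `j` exactly at the times
`t < psTime s j` at which every item she ranks above `j` is already exhausted, so `psProb s i j`
is the length of that set of times (`psProb_eq_measureReal`).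

Doubling: if only agent `i` changes her report, every item is exhausted at most twice as fast.
Otherwise take the first item `j` (in the new run) for which this fails. Any other agent eating
`j` at time `t` in the new run eats it at time `2t` in the old one, so the other agents together
get at most half of `j`, while `i` gets at most `psTime s' j < 1/2` of it; then `j` is not used
up. Counting: at most `n t` items are exhausted by time `t`, which by Abel summation gives
sd-proportionality, so the truthful deviation is worth `1/n` to every agent.

At a coarse correlated equilibrium `q`, deviating to rank `μ i` first (for an optimal matching
`μ`) is worth at least `u i (μ i) · psTime (μ i) / 2` to agent `i`, and the welfare `E` of `q`
is at least `1`. At most `√n` items are exhausted before time `1/√n`: the agents whose optimal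
item is one of them contribute at most `√n` to `SW_OPT`, every other agent `i` at most
`√n · u i (μ i) · psTime (μ i)`. Hence `SW_OPT ≤ 2√n E + √n ≤ 3√n E`.
-/

open Finset

lemma Monotone.le_iff_le_of_mem_Ico {α : Type*} [LinearOrder α] {T : ℕ → α} (hT : Monotone T)
    {k m : ℕ} {t : α} (ht : t ∈ Set.Ico (T k) (T (k + 1))) : T m ≤ t ↔ T m ≤ T k :=
  ⟨fun h => hT (Nat.lt_succ_iff.1 (hT.reflect_lt (h.trans_lt ht.2))), fun h => h.trans ht.1⟩

namespace Finset

/-- Abel summation, in the form of a stochastic-dominance inequality. -/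
lemma sum_mul_nonneg_of_antitoneOn {ι : Type*} [LinearOrder ι] (s : Finset ι)
    {w f : ι → ℝ} (hw : AntitoneOn w s) (hw0 : ∀ x ∈ s, 0 ≤ w x)
    (hf : ∀ k ∈ s, 0 ≤ ∑ x ∈ s with x ≤ k, f x) : 0 ≤ ∑ x ∈ s, w x * f x := by
  classical
  induction s using induction_on_max generalizing w with
  | empty => simp
  | insert a s ha ih =>
    have hsplit : ∑ x ∈ insert a s, w x * f x =
        ∑ x ∈ s, (w x - w a) * f x + w a * ∑ x ∈ insert a s, f x := by
      rw [mul_sum, sum_insert fun h => (ha a h).false, sum_insert fun h => (ha a h).false]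
      simp only [sub_mul, sum_sub_distrib]
      ring
    have hwa : ∀ x ∈ s, w a ≤ w x := fun x hx =>
      hw (mem_insert_of_mem hx) (mem_insert_self a s) (ha x hx).le
    have hfa : 0 ≤ ∑ x ∈ insert a s, f x := by
      simpa [filter_true_of_mem fun x hx => (mem_insert.1 hx).elim le_of_eq
        fun hx => (ha x hx).le] using hf a (mem_insert_self a s)
    rw [hsplit]
    refine add_nonneg (ih (fun x hx y hy hxy => ?_) (fun x hx => ?_) fun k hk => ?_)
      (mul_nonneg (hw0 a (mem_insert_self a s)) hfa)
    · exact sub_le_sub_right (hw (mem_insert_of_mem hx) (mem_insert_of_mem hy) hxy) _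
    · exact sub_nonneg.2 (hwa x hx)
    · have := hf k (mem_insert_of_mem hk)
      rwa [filter_insert, if_neg (not_le.2 (ha k hk))] at this

lemma sum_le_sum_mul_div_add_card {ι : Type*} [Fintype ι] {x t : ι → ℝ} {c : ℝ}
    (hc : 0 < c) (hx0 : ∀ i, 0 ≤ x i) (hx1 : ∀ i, x i ≤ 1) (ht : ∀ i, 0 ≤ t i) :
    ∑ i, x i ≤ (∑ i, x i * t i) / c + #{i | t i ≤ c} := by
  rw [card_filter, Nat.cast_sum, sum_div, ← sum_add_distrib]
  refine sum_le_sum fun i _ => ?_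
  have hxt : 0 ≤ x i * t i / c := div_nonneg (mul_nonneg (hx0 i) (ht i)) hc.le
  split_ifs with hti
  · push_cast
    linarith [hx1 i]
  · rw [Nat.cast_zero, add_zero, le_div_iff₀ hc]
    exact mul_le_mul_of_nonneg_left (not_le.1 hti).le (hx0 i)

end Finset

lemma UnitSum.le_one {n : ℕ} {v : Fin n → ℝ} (hv : UnitSum v) (j : Fin n) : v j ≤ 1 :=
  hv.2 ▸ single_le_sum (fun j _ => hv.1 j) (mem_univ j)

namespace Real

open MeasureTheory

lemma volume_real_preimage_mul_left {a : ℝ} (ha : a ≠ 0) (E : Set ℝ) :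
    volume.real ((a * ·) ⁻¹' E) = |a⁻¹| * volume.real E := by
  simp [Measure.real, Real.volume_preimage_mul_left ha]

lemma volume_real_inter_Ico_of_forall_mem_iff {E : Set ℝ} {a b : ℝ} (hab : a ≤ b)
    (hE : ∀ t ∈ Set.Ico a b, t ∈ E ↔ a ∈ E) [Decidable (a ∈ E)] :
    volume.real (E ∩ Set.Ico a b) = if a ∈ E then b - a else 0 := by
  split_ifs with ha
  · rw [Set.inter_eq_right.2 fun t ht => (hE t ht).2 ha, Real.volume_real_Ico_of_le hab]
  · rw [Set.eq_empty_of_forall_notMem (s := E ∩ Set.Ico a b) fun t ht => ha ((hE t ht.2).1 ht.1),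
      measureReal_empty]

lemma volume_inter_Ico_ne_top (E : Set ℝ) {a b : ℝ} : volume (E ∩ Set.Ico a b) ≠ ⊤ :=
  ((measure_mono Set.inter_subset_right).trans_lt measure_Ico_lt_top).ne

end Real

namespace PS

open MeasureTheory

variable {n : ℕ}

noncomputable def avail (st : PSState n) : Finset (Fin n) := {j | 0 < st.rem j}

noncomputable def availRanks (s : Fin n → (Fin n ≃ Fin n)) (st : PSState n) (i : Fin n) :
    Finset (Fin n) := {r | s i r ∈ avail st}

noncomputable def topItem (s : Fin n → (Fin n ≃ Fin n)) (st : PSState n) (i : Fin n) : Fin n :=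
  if hR : (availRanks s st i).Nonempty then s i ((availRanks s st i).min' hR) else i

noncomputable def rate (s : Fin n → (Fin n ≃ Fin n)) (st : PSState n) (j : Fin n) : ℕ :=
  #{i | topItem s st i = j}

noncomputable def phaseRatios (s : Fin n → (Fin n ≃ Fin n)) (st : PSState n) : Set ℝ :=
  {x | ∃ j ∈ avail st, 0 < rate s st j ∧ x = st.rem j / rate s st j}

noncomputable def phaseLength (s : Fin n → (Fin n ≃ Fin n)) (st : PSState n) : ℝ :=
  sInf (phaseRatios s st)

section Phase

variable {s : Fin n → (Fin n ≃ Fin n)} {st : PSState n}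

@[simp]
lemma mem_avail {j : Fin n} : j ∈ avail st ↔ 0 < st.rem j := by
  simp [avail]

lemma availRanks_nonempty (h : (avail st).Nonempty) (i : Fin n) :
    (availRanks s st i).Nonempty := by
  obtain ⟨j, hj⟩ := h
  exact ⟨(s i).symm j, by simpa [availRanks] using hj⟩

lemma psStep_of_nonempty (h : (avail st).Nonempty) :
    psStep s st =
      { rem := fun j => st.rem j - rate s st j * phaseLength s st
        cons := fun i j => st.cons i j + if topItem s st i = j then phaseLength s st else 0
        time := st.time + phaseLength s st
        fin := fun j =>
          if 0 < st.rem j ∧ st.rem j - rate s st j * phaseLength s st ≤ 0 then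
            st.time + phaseLength s st else st.fin j } := by
  have h' : ({j | 0 < st.rem j} : Finset (Fin n)).Nonempty := h
  rw [psStep, dif_pos h']
  have htop : ∀ i, (if hR : ({r | s i r ∈ ({j | 0 < st.rem j} : Finset (Fin n))} :
      Finset (Fin n)).Nonempty then s i (Finset.min' _ hR) else h'.choose) = topItem s st i :=
    fun i => by rw [topItem, dif_pos (availRanks_nonempty h i), dif_pos]; rfl
  simp only [htop]
  rfl

lemma psStep_of_not_nonempty (h : ¬ (avail st).Nonempty) : psStep s st = st :=
  dif_neg h

lemma topItem_eq_iff (h : (avail st).Nonempty) {i j : Fin n} :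
    topItem s st i = j ↔ 0 < st.rem j ∧ ∀ r < (s i).symm j, st.rem (s i r) ≤ 0 := by
  have hR := availRanks_nonempty (s := s) h i
  have mem : ∀ r, r ∈ availRanks s st i ↔ 0 < st.rem (s i r) := by simp [availRanks]
  rw [topItem, dif_pos hR]
  constructor
  · rintro rfl
    simp only [Equiv.symm_apply_apply]
    refine ⟨(mem _).1 (min'_mem _ hR), fun r hr => not_lt.1 fun hpos => ?_⟩
    exact (min'_le _ r ((mem r).2 hpos)).not_gt hr
  · rintro ⟨hj, hmin⟩
    rw [← Equiv.eq_symm_apply]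
    refine le_antisymm (min'_le _ _ ((mem _).2 (by simpa using hj))) (not_lt.1 fun hlt => ?_)
    exact (hmin _ hlt).not_gt ((mem _).1 (min'_mem _ hR))

lemma topItem_mem_avail (h : (avail st).Nonempty) (i : Fin n) : topItem s st i ∈ avail st :=
  mem_avail.2 ((topItem_eq_iff h).1 rfl).1

lemma rate_eq_zero (h : (avail st).Nonempty) {j : Fin n} (hj : j ∉ avail st) :
    rate s st j = 0 := by
  rw [rate, card_eq_zero, filter_eq_empty_iff]
  rintro i - rfl
  exact hj (topItem_mem_avail h i)

lemma sum_ite_topItem_eq (j : Fin n) (x : ℝ) :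
    ∑ i, (if topItem s st i = j then x else 0) = rate s st j * x := by
  classical
  rw [sum_ite, sum_const, sum_const_zero, add_zero, nsmul_eq_mul, rate]

lemma isLeast_phaseLength (h : (avail st).Nonempty) :
    IsLeast (phaseRatios s st) (phaseLength s st) := by
  have hfin : (phaseRatios s st).Finite :=
    (Set.finite_range fun j => st.rem j / rate s st j).subset
      fun _ ⟨j, _, _, hx⟩ => ⟨j, hx.symm⟩
  have hne : (phaseRatios s st).Nonempty :=
    ⟨_, _, topItem_mem_avail (s := s) h h.choose, card_pos.2 ⟨h.choose, by simp⟩, rfl⟩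
  exact ⟨hne.csInf_mem hfin, fun _ hx => csInf_le hfin.bddBelow hx⟩

lemma phaseLength_pos (h : (avail st).Nonempty) : 0 < phaseLength s st := by
  obtain ⟨j, hj, hr, he⟩ := (isLeast_phaseLength (s := s) h).1
  rw [he]
  exact div_pos (mem_avail.1 hj) (by exact_mod_cast hr)

lemma rate_mul_phaseLength_le (h : (avail st).Nonempty) {j : Fin n} (hj : 0 ≤ st.rem j) :
    rate s st j * phaseLength s st ≤ st.rem j := by
  rcases Nat.eq_zero_or_pos (rate s st j) with hr | hr
  · simpa [hr] using hj
  have hjav : j ∈ avail st := by_contra fun hj' => hr.ne' (rate_eq_zero h hj')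
  have hle := (isLeast_phaseLength (s := s) h).2 ⟨j, hjav, hr, rfl⟩
  rwa [le_div_iff₀' (by exact_mod_cast hr)] at hle

lemma exists_rem_eq_rate_mul_phaseLength (h : (avail st).Nonempty) :
    ∃ j ∈ avail st, st.rem j = rate s st j * phaseLength s st := by
  obtain ⟨j, hj, hr, he⟩ := (isLeast_phaseLength (s := s) h).1
  refine ⟨j, hj, ?_⟩
  rw [he, mul_div_cancel₀ _ (by exact_mod_cast hr.ne')]

end Phase

noncomputable def state (s : Fin n → (Fin n ≃ Fin n)) (k : ℕ) : PSState n :=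
  (psStep s)^[k] ⟨fun _ => 1, fun _ _ => 0, 0, fun _ => 1⟩

structure Invariant (st : PSState n) : Prop where
  rem_nonneg : ∀ j, 0 ≤ st.rem j
  time_nonneg : 0 ≤ st.time
  cons_nonneg : ∀ i j, 0 ≤ st.cons i j
  sum_cons_row : ∀ i, ∑ j, st.cons i j = st.time
  sum_cons_col : ∀ j, ∑ i, st.cons i j = 1 - st.rem j
  fin_of_rem_eq_zero : ∀ j, st.rem j = 0 → 0 < st.fin j ∧ st.fin j ≤ st.time

lemma Invariant.rem_le_one {st : PSState n} (G : Invariant st) (j : Fin n) : st.rem j ≤ 1 := by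
  linarith [G.sum_cons_col j, sum_nonneg fun i (_ : i ∈ univ) => G.cons_nonneg i j]

lemma Invariant.sum_one_sub_rem {st : PSState n} (G : Invariant st) :
    ∑ j, (1 - st.rem j) = n * st.time := by
  simp_rw [← G.sum_cons_col]
  rw [sum_comm]
  simp [G.sum_cons_row]

section Run

variable {s : Fin n → (Fin n ≃ Fin n)}

lemma Invariant.psStep {st : PSState n} (G : Invariant st) : Invariant (psStep s st) := by
  by_cases h : (avail st).Nonempty
  swap
  · rwa [psStep_of_not_nonempty h]
  have hΔ := phaseLength_pos (s := s) h
  rw [psStep_of_nonempty h]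
  refine ⟨fun j => ?_, ?_, fun i j => ?_, fun i => ?_, fun j => ?_, fun j hj => ?_⟩
  · linarith [rate_mul_phaseLength_le (s := s) h (G.rem_nonneg j)]
  · linarith [G.time_nonneg]
  · have := G.cons_nonneg i j
    dsimp only
    positivity
  · simp [sum_add_distrib, G.sum_cons_row]
  · simp only [sum_add_distrib, G.sum_cons_col, sum_ite_topItem_eq]
    ring
  · dsimp only at hj ⊢
    rcases (G.rem_nonneg j).eq_or_lt with h0 | h0
    · rw [if_neg fun h' => h'.1.ne h0]
      have := G.fin_of_rem_eq_zero j h0.symm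
      constructor <;> linarith
    · rw [if_pos ⟨h0, hj.le⟩]
      constructor <;> linarith [G.time_nonneg]

lemma state_succ (k : ℕ) : state s (k + 1) = psStep s (state s k) :=
  Function.iterate_succ_apply' _ _ _

lemma psFinal_eq_state : psFinal s = state s n := rfl

lemma invariant_state (k : ℕ) : Invariant (state s k) := by
  induction k with
  | zero =>
    refine ⟨?_, ?_, ?_, ?_, ?_, ?_⟩ <;> simp [state]
  | succ k ih => rw [state_succ]; exact ih.psStep

lemma time_state_succ_of_nonempty {k : ℕ} (h : (avail (state s k)).Nonempty) :
    (state s (k + 1)).time = (state s k).time + phaseLength s (state s k) := by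
  rw [state_succ, psStep_of_nonempty h]

lemma rem_state_succ_of_nonempty {k : ℕ} (h : (avail (state s k)).Nonempty) (j : Fin n) :
    (state s (k + 1)).rem j =
      (state s k).rem j - rate s (state s k) j * phaseLength s (state s k) := by
  rw [state_succ, psStep_of_nonempty h]

lemma time_lt_time_succ {k : ℕ} (h : (avail (state s k)).Nonempty) :
    (state s k).time < (state s (k + 1)).time := by
  rw [time_state_succ_of_nonempty h]
  linarith [phaseLength_pos (s := s) h]

lemma monotone_time : Monotone fun k => (state s k).time := by
  refine monotone_nat_of_le_succ fun k => ?_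
  by_cases h : (avail (state s k)).Nonempty
  · exact (time_lt_time_succ h).le
  · rw [state_succ, psStep_of_not_nonempty h]

lemma antitone_rem (j : Fin n) : Antitone fun k => (state s k).rem j := by
  refine antitone_nat_of_succ_le fun k => ?_
  by_cases h : (avail (state s k)).Nonempty
  · rw [rem_state_succ_of_nonempty h]
    have : (0 : ℝ) ≤ rate s (state s k) j * phaseLength s (state s k) :=
      mul_nonneg (Nat.cast_nonneg _) (phaseLength_pos h).le
    linarith
  · rw [state_succ, psStep_of_not_nonempty h]

lemma card_avail_state_le (k : ℕ) : #(avail (state s k)) ≤ n - k := by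
  induction k with
  | zero => simpa using card_le_univ (avail (state s 0))
  | succ k ih =>
    by_cases h : (avail (state s k)).Nonempty
    · suffices avail (state s (k + 1)) ⊂ avail (state s k) by
        have := card_lt_card this
        omega
      refine ⟨fun j hj => ?_, fun hsub => ?_⟩
      · simp only [mem_avail] at hj ⊢
        exact hj.trans_le (antitone_rem j k.le_succ)
      · obtain ⟨j, hj, he⟩ := exists_rem_eq_rate_mul_phaseLength (s := s) h
        have := mem_avail.1 (hsub hj)
        rw [rem_state_succ_of_nonempty h, ← he, sub_self] at this
        exact this.false
    · rw [state_succ, psStep_of_not_nonempty h, not_nonempty_iff_eq_empty.1 h]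
      simp

lemma rem_state_eq_zero {k : ℕ} (hk : n ≤ k) (j : Fin n) : (state s k).rem j = 0 := by
  have hempty : avail (state s k) = ∅ := by
    simpa [card_eq_zero] using (card_avail_state_le (s := s) k).trans (Nat.sub_eq_zero_of_le hk).le
  exact le_antisymm (by simpa [hempty] using mem_avail.not.1 (hempty ▸ notMem_empty j))
    ((invariant_state k).rem_nonneg j)

lemma time_state_self (hn : 0 < n) : (state s n).time = 1 := by
  have h := (invariant_state (s := s) n).sum_one_sub_rem
  simp only [rem_state_eq_zero le_rfl, sub_zero, sum_const, card_univ, Fintype.card_fin,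
    nsmul_eq_mul, mul_one] at h
  exact (mul_eq_left₀ (by exact_mod_cast hn.ne')).1 h.symm

lemma fin_state_eq_of_rem_eq_zero {k l : ℕ} (hkl : k ≤ l) {j : Fin n}
    (hj : (state s k).rem j = 0) : (state s l).fin j = (state s k).fin j := by
  induction l, hkl using Nat.le_induction with
  | base => rfl
  | succ l hkl ih =>
    have hl : (state s l).rem j = 0 :=
      le_antisymm (hj ▸ antitone_rem j hkl) ((invariant_state l).rem_nonneg j)
    rw [← ih, state_succ]
    by_cases h : (avail (state s l)).Nonempty
    · rw [psStep_of_nonempty h]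
      simp [hl]
    · rw [psStep_of_not_nonempty h]

lemma psTime_eq_fin_state {k : ℕ} {j : Fin n} (hj : (state s k).rem j = 0) :
    psTime s j = (state s k).fin j := by
  rcases le_total k n with h | h
  · exact fin_state_eq_of_rem_eq_zero h hj
  · exact (fin_state_eq_of_rem_eq_zero h (rem_state_eq_zero le_rfl j)).symm

lemma psTime_le_time_of_rem_eq_zero {k : ℕ} {j : Fin n} (hj : (state s k).rem j = 0) :
    psTime s j ≤ (state s k).time :=
  psTime_eq_fin_state hj ▸ ((invariant_state k).fin_of_rem_eq_zero j hj).2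

lemma psTime_pos (j : Fin n) : 0 < psTime s j :=
  psTime_eq_fin_state (rem_state_eq_zero le_rfl j) ▸
    ((invariant_state n).fin_of_rem_eq_zero j (rem_state_eq_zero le_rfl j)).1

lemma psTime_le_one (j : Fin n) : psTime s j ≤ 1 :=
  time_state_self (s := s) j.pos ▸ psTime_le_time_of_rem_eq_zero (rem_state_eq_zero le_rfl j)

lemma exists_psTime_eq_time_succ (j : Fin n) :
    ∃ k, 0 < (state s k).rem j ∧ (state s (k + 1)).rem j = 0 ∧
      psTime s j = (state s (k + 1)).time := by
  classical
  have hex : ∃ k, (state s (k + 1)).rem j = 0 := ⟨n, rem_state_eq_zero n.le_succ j⟩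
  set k := Nat.find hex
  have hdead : (state s (k + 1)).rem j = 0 := Nat.find_spec hex
  have halive : 0 < (state s k).rem j := by
    rcases Nat.eq_zero_or_pos k with hk0 | hk0
    · simp [hk0, state]
    · have hmin : ∀ m < k, (state s (m + 1)).rem j ≠ 0 := fun m hm => Nat.find_min hex hm
      have := hmin (k - 1) (by omega)
      rw [Nat.sub_add_cancel hk0] at this
      exact ((invariant_state _).rem_nonneg j).lt_of_ne' this
  have hav : (avail (state s k)).Nonempty := ⟨j, mem_avail.2 halive⟩
  refine ⟨k, halive, hdead, ?_⟩
  rw [psTime_eq_fin_state hdead, state_succ, psStep_of_nonempty hav]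
  rw [rem_state_succ_of_nonempty hav] at hdead
  exact if_pos ⟨halive, hdead.le⟩

lemma rem_eq_zero_iff_psTime_le {k : ℕ} {j : Fin n} :
    (state s k).rem j = 0 ↔ psTime s j ≤ (state s k).time := by
  refine ⟨psTime_le_time_of_rem_eq_zero, fun hle => by_contra fun hk => ?_⟩
  have hpos := ((invariant_state k).rem_nonneg j).lt_of_ne' hk
  obtain ⟨e, -, he0, he⟩ := exists_psTime_eq_time_succ (s := s) j
  have hke : k < e + 1 := by
    by_contra hek
    exact hpos.ne' (le_antisymm (he0 ▸ antitone_rem j (not_lt.1 hek))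
      ((invariant_state k).rem_nonneg j))
  have := time_lt_time_succ (s := s) ⟨j, mem_avail.2 hpos⟩
  have := monotone_time (s := s) (Nat.succ_le_of_lt hke)
  dsimp only at this
  linarith

lemma rem_nonpos_iff_psTime_le {k : ℕ} {j : Fin n} :
    (state s k).rem j ≤ 0 ↔ psTime s j ≤ (state s k).time := by
  rw [← rem_eq_zero_iff_psTime_le, le_antisymm_iff,
    and_iff_left ((invariant_state k).rem_nonneg j)]

lemma pos_rem_iff_time_lt_psTime {k : ℕ} {j : Fin n} :
    0 < (state s k).rem j ↔ (state s k).time < psTime s j := by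
  rw [← not_le, ← not_le, rem_nonpos_iff_psTime_le]

lemma card_filter_psTime_le_le_mul {t : ℝ} (ht : 0 ≤ t) : (#{j | psTime s j ≤ t} : ℝ) ≤ n * t := by
  obtain hempty | hne := ({j | psTime s j ≤ t} : Finset (Fin n)).eq_empty_or_nonempty
  · rw [hempty, card_empty, Nat.cast_zero]
    positivity
  obtain ⟨j₀, hj₀, hmax⟩ := exists_max_image _ (psTime s) hne
  obtain ⟨k, -, -, hk⟩ := exists_psTime_eq_time_succ (s := s) j₀
  set st := state s (k + 1)
  have G : Invariant st := invariant_state _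
  have hdead : ∀ j ∈ ({j | psTime s j ≤ t} : Finset (Fin n)), st.rem j = 0 :=
    fun j hj => rem_eq_zero_iff_psTime_le.2 (hk ▸ hmax j hj)
  calc (#{j | psTime s j ≤ t} : ℝ) = ∑ j ∈ {j | psTime s j ≤ t}, (1 - st.rem j) := by
        rw [cast_card]
        exact sum_congr rfl fun j hj => by rw [hdead j hj, sub_zero]
    _ ≤ ∑ j, (1 - st.rem j) :=
        sum_le_sum_of_subset_of_nonneg (subset_univ _) fun j _ _ => sub_nonneg.2 (G.rem_le_one j)
    _ = n * st.time := G.sum_one_sub_rem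
    _ ≤ n * t := by
        rw [← hk]
        exact mul_le_mul_of_nonneg_left (by simpa using hj₀) n.cast_nonneg

/-- The times at which agent `i` eats item `j` in the continuous-time eating process. -/
def eatingTimes (s : Fin n → (Fin n ≃ Fin n)) (i j : Fin n) : Set ℝ :=
  {t | 0 ≤ t ∧ t < psTime s j ∧ ∀ r < (s i).symm j, psTime s (s i r) ≤ t}

lemma eatingTimes_subset_Ico (i j : Fin n) : eatingTimes s i j ⊆ Set.Ico 0 (psTime s j) :=
  fun _ ht => ⟨ht.1, ht.2.1⟩

lemma volume_eatingTimes_ne_top (i j : Fin n) : volume (eatingTimes s i j) ≠ ⊤ :=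
  ((measure_mono (eatingTimes_subset_Ico i j)).trans_lt measure_Ico_lt_top).ne

lemma measurableSet_eatingTimes (i j : Fin n) : MeasurableSet (eatingTimes s i j) := by
  have : eatingTimes s i j =
      Set.Ico 0 (psTime s j) ∩ ⋂ r, ⋂ (_ : r < (s i).symm j), Set.Ici (psTime s (s i r)) := by
    ext t
    simp [eatingTimes, and_assoc]
  rw [this]
  exact measurableSet_Ico.inter
    (MeasurableSet.iInter fun _ => MeasurableSet.iInter fun _ => measurableSet_Ici)

lemma time_mem_eatingTimes_iff {k : ℕ} (h : (avail (state s k)).Nonempty) {i j : Fin n} :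
    (state s k).time ∈ eatingTimes s i j ↔ topItem s (state s k) i = j := by
  simp only [eatingTimes, Set.mem_ofPred_eq, topItem_eq_iff h, rem_nonpos_iff_psTime_le,
    pos_rem_iff_time_lt_psTime, and_iff_right (invariant_state k).time_nonneg]

lemma mem_eatingTimes_iff_of_mem_Ico {k : ℕ} {t : ℝ}
    (ht : t ∈ Set.Ico (state s k).time (state s (k + 1)).time) {i j : Fin n} :
    t ∈ eatingTimes s i j ↔ (state s k).time ∈ eatingTimes s i j := by
  have hle : ∀ r, psTime s r ≤ t ↔ psTime s r ≤ (state s k).time := fun r => by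
    obtain ⟨m, -, -, hm⟩ := exists_psTime_eq_time_succ (s := s) r
    rw [hm]
    exact monotone_time.le_iff_le_of_mem_Ico ht
  have hlt : t < psTime s j ↔ (state s k).time < psTime s j := by
    simpa only [not_le] using (hle j).not
  have h0 : 0 ≤ (state s k).time := (invariant_state k).time_nonneg
  simp only [eatingTimes, Set.mem_ofPred_eq, hle, hlt,
    and_iff_right h0, and_iff_right (h0.trans ht.1)]

open Classical in
lemma cons_state_succ (k : ℕ) (i j : Fin n) :
    (state s (k + 1)).cons i j = (state s k).cons i j +
      if (state s k).time ∈ eatingTimes s i j then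
        (state s (k + 1)).time - (state s k).time else 0 := by
  by_cases h : (avail (state s k)).Nonempty
  · rw [time_state_succ_of_nonempty h, add_sub_cancel_left, state_succ, psStep_of_nonempty h]
    simp only [time_mem_eatingTimes_iff h]
  · simp [state_succ, psStep_of_not_nonempty h]

lemma cons_state_eq_measureReal (k : ℕ) (i j : Fin n) :
    (state s k).cons i j = volume.real (eatingTimes s i j ∩ Set.Ico 0 (state s k).time) := by
  classical
  induction k with
  | zero => simp [state]
  | succ k ih =>
    have h0 := (invariant_state (s := s) k).time_nonneg
    have hmono := monotone_time (s := s) k.le_succ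
    rw [cons_state_succ, ih, ← Set.Ico_union_Ico_eq_Ico h0 hmono, Set.inter_union_distrib_left,
      measureReal_union (h₁ := Real.volume_inter_Ico_ne_top _)
        (h₂ := Real.volume_inter_Ico_ne_top _),
      Real.volume_real_inter_Ico_of_forall_mem_iff hmono
        fun t ht => mem_eatingTimes_iff_of_mem_Ico ht]
    · exact (Set.Ico_disjoint_Ico_same.mono Set.inter_subset_right Set.inter_subset_right)
    · exact (measurableSet_eatingTimes i j).inter measurableSet_Ico

theorem psProb_eq_measureReal (i j : Fin n) : psProb s i j = volume.real (eatingTimes s i j) := by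
  have hsub : eatingTimes s i j ⊆ Set.Ico 0 1 := fun t ht =>
    ⟨ht.1, ht.2.1.trans_le (psTime_le_one j)⟩
  rw [psProb, psFinal_eq_state, cons_state_eq_measureReal, time_state_self i.pos,
    Set.inter_eq_left.2 hsub]

lemma psProb_nonneg (i j : Fin n) : 0 ≤ psProb s i j :=
  psProb_eq_measureReal (s := s) i j ▸ measureReal_nonneg

lemma psProb_le_psTime (i j : Fin n) : psProb s i j ≤ psTime s j := by
  rw [psProb_eq_measureReal]
  calc volume.real (eatingTimes s i j) ≤ volume.real (Set.Ico 0 (psTime s j)) :=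
        measureReal_mono (eatingTimes_subset_Ico i j) measure_Ico_lt_top.ne
    _ = psTime s j := by simp [(psTime_pos j).le]

lemma psProb_eq_psTime_of_isBot {i j : Fin n} (hj : IsBot ((s i).symm j)) :
    psProb s i j = psTime s j := by
  have : eatingTimes s i j = Set.Ico 0 (psTime s j) := by
    ext t
    simp [eatingTimes, fun r => not_lt.2 (hj r)]
  rw [psProb_eq_measureReal, this, Real.volume_real_Ico_of_le (psTime_pos j).le, sub_zero]

lemma sum_psProb_left (j : Fin n) : ∑ i, psProb s i j = 1 := by
  simp [psProb, psFinal_eq_state, (invariant_state n).sum_cons_col, rem_state_eq_zero le_rfl]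

lemma psTime_le_sum_psProb_of_isLowerSet (i : Fin n) {R : Finset (Fin n)}
    (hR : IsLowerSet (R : Set (Fin n))) {r₀ : Fin n} (hr₀ : r₀ ∈ R) :
    psTime s (s i r₀) ≤ ∑ r ∈ R, psProb s i (s i r) := by
  have hcover : Set.Ico 0 (psTime s (s i r₀)) ⊆ ⋃ r ∈ R, eatingTimes s i (s i r) := by
    rintro t ⟨ht0, ht⟩
    have hne : ({r ∈ R | t < psTime s (s i r)} : Finset (Fin n)).Nonempty :=
      ⟨r₀, by simp [hr₀, ht]⟩
    obtain ⟨hmem, hmin⟩ := mem_filter.1 (min'_mem _ hne)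
    refine Set.mem_biUnion hmem ⟨ht0, hmin, fun r hr => not_lt.1 fun hlt => ?_⟩
    rw [Equiv.symm_apply_apply] at hr
    exact (min'_le _ r (mem_filter.2 ⟨hR hr.le hmem, hlt⟩)).not_gt hr
  calc psTime s (s i r₀) = volume.real (Set.Ico 0 (psTime s (s i r₀))) := by
        simp [(psTime_pos _).le]
    _ ≤ volume.real (⋃ r ∈ R, eatingTimes s i (s i r)) :=
        measureReal_mono hcover (measure_biUnion_finset_le _ _ |>.trans_lt
          (ENNReal.sum_lt_top.2 fun _ _ => (volume_eatingTimes_ne_top i _).lt_top)).ne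
    _ ≤ ∑ r ∈ R, psProb s i (s i r) := by
        simpa only [psProb_eq_measureReal] using measureReal_biUnion_finset_le R _

lemma card_div_le_sum_psProb_of_isLowerSet (i : Fin n) {R : Finset (Fin n)}
    (hR : IsLowerSet (R : Set (Fin n))) : (#R : ℝ) / n ≤ ∑ r ∈ R, psProb s i (s i r) := by
  obtain rfl | hne := R.eq_empty_or_nonempty
  · simp
  obtain ⟨r₀, hr₀, hmax⟩ := exists_max_image R (fun r => psTime s (s i r)) hne
  have hcard : (#R : ℝ) ≤ n * psTime s (s i r₀) := by
    refine le_trans ?_ (card_filter_psTime_le_le_mul (s := s) (psTime_pos _).le)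
    rw [← card_map (s i).toEmbedding]
    exact_mod_cast card_le_card fun j hj => by
      obtain ⟨r, hr, rfl⟩ := mem_map.1 hj
      simpa using hmax r hr
  rw [div_le_iff₀ (by exact_mod_cast i.pos)]
  nlinarith [psTime_le_sum_psProb_of_isLowerSet (s := s) i hR hr₀]

/-- Sd-proportionality: reporting her true ordering guarantees an agent the average of her
values. -/
theorem sum_div_le_sum_psProb_mul {i : Fin n} {w : Fin n → ℝ} (hw0 : ∀ j, 0 ≤ w j)
    (hw : Antitone (w ∘ s i)) : (∑ j, w j) / n ≤ ∑ j, psProb s i j * w j := by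
  rw [← (s i).sum_comp w, ← (s i).sum_comp (fun j => psProb s i j * w j), ← sub_nonneg,
    sum_div, ← sum_sub_distrib]
  have key := sum_mul_nonneg_of_antitoneOn univ (w := w ∘ s i)
    (f := fun r => psProb s i (s i r) - 1 / n) (hw.antitoneOn _) (fun r _ => hw0 _)
    fun k _ => by
      have := card_div_le_sum_psProb_of_isLowerSet (s := s) i
        (R := {r | r ≤ k}) fun a b hba ha => by simpa using hba.trans (by simpa using ha)
      rwa [sum_sub_distrib, sum_const, nsmul_eq_mul, mul_one_div, sub_nonneg]
  exact key.trans_eq (sum_congr rfl fun r _ => by simp only [Function.comp]; ring)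

theorem psTime_le_two_mul_psTime {s s' : Fin n → (Fin n ≃ Fin n)} {i : Fin n}
    (hss : ∀ m ≠ i, s m = s' m) (j : Fin n) : psTime s j ≤ 2 * psTime s' j := by
  induction j using
    (Finite.wellFounded_of_trans_of_irrefl (InvImage (· < ·) (psTime s'))).induction with
  | _ j ih
  by_contra! hcon
  have hother : ∀ m ≠ i, psProb s' m j ≤ psProb s m j / 2 := fun m hm => by
    have hsub : eatingTimes s' m j ⊆ (2 * ·) ⁻¹' eatingTimes s m j := by
      rintro t ⟨ht0, htj, hpref⟩
      refine ⟨by positivity, by linarith, fun r hr => ?_⟩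
      rw [hss m hm] at hr ⊢
      have hr' := hpref r hr
      linarith [ih _ (hr'.trans_lt htj)]
    rw [psProb_eq_measureReal, psProb_eq_measureReal]
    calc volume.real (eatingTimes s' m j) ≤ volume.real ((2 * ·) ⁻¹' eatingTimes s m j) :=
          measureReal_mono hsub (by
            rw [Real.volume_preimage_mul_left two_ne_zero]
            exact ENNReal.mul_ne_top ENNReal.ofReal_ne_top (volume_eatingTimes_ne_top m j))
      _ = volume.real (eatingTimes s m j) / 2 := by
          rw [Real.volume_real_preimage_mul_left two_ne_zero]
          norm_num [div_eq_inv_mul]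
  have hsum_other : ∑ m ∈ univ.erase i, psProb s m j ≤ 1 :=
    sum_psProb_left (s := s) j ▸
      sum_le_sum_of_subset_of_nonneg (erase_subset i univ) fun m _ _ => psProb_nonneg m j
  have hdev := psProb_le_psTime (s := s') i j
  have hothers :
      ∑ m ∈ univ.erase i, psProb s' m j ≤ (∑ m ∈ univ.erase i, psProb s m j) / 2 := by
    rw [sum_div]
    exact sum_le_sum fun m hm => hother m (ne_of_mem_erase hm)
  have htotal := sum_psProb_left (s := s') j
  rw [← add_sum_erase _ _ (mem_univ i)] at htotal
  linarith [psTime_le_one (s := s) j]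

end Run

section Welfare

variable {u : Fin n → Fin n → ℝ} {q : (Fin n → (Fin n ≃ Fin n)) → ℝ}

noncomputable def expectedUtility (u : Fin n → Fin n → ℝ)
    (q : (Fin n → (Fin n ≃ Fin n)) → ℝ) (i : Fin n) : ℝ :=
  ∑ sp, q sp * ∑ j, psProb sp i j * u i j

lemma sum_expectedUtility : ∑ i, expectedUtility u q i = ∑ sp, q sp * psSW u sp := by
  simp only [expectedUtility, psSW, mul_sum]
  exact sum_comm

lemma _root_.PSCCE.le_expectedUtility (hq : PSCCE u q) (i : Fin n) (s' : Fin n ≃ Fin n)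
    {g : (Fin n → (Fin n ≃ Fin n)) → ℝ}
    (hg : ∀ sp, g sp ≤ ∑ j, psProb (Function.update sp i s') i j * u i j) :
    ∑ sp, q sp * g sp ≤ expectedUtility u q i :=
  (sum_le_sum fun sp _ => mul_le_mul_of_nonneg_left (hg sp) (hq.1 sp)).trans (hq.2.2 i s')

lemma _root_.PSCCE.inv_le_expectedUtility (hu : ∀ i, UnitSum (u i)) (hq : PSCCE u q)
    (i : Fin n) : (n : ℝ)⁻¹ ≤ expectedUtility u q i := by
  set sorted : Fin n ≃ Fin n := Fin.revPerm.trans (Tuple.sort (u i))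
  have hsorted : Antitone (u i ∘ sorted) :=
    fun r r' hrr' => Tuple.monotone_sort (u i) (Fin.rev_le_rev.2 hrr')
  refine le_trans (le_of_eq ?_) (hq.le_expectedUtility i sorted (g := fun _ => (n : ℝ)⁻¹)
    fun sp => ?_)
  · rw [← sum_mul, hq.2.1, one_mul]
  · have := sum_div_le_sum_psProb_mul (s := Function.update sp i _) (i := i) (hu i).1
      (by rwa [Function.update_self])
    rwa [(hu i).2, one_div] at this

lemma _root_.PSCCE.sum_mul_psTime_le_two_mul_expectedUtility (hu : ∀ i, UnitSum (u i))
    (hq : PSCCE u q) (i j : Fin n) :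
    ∑ sp, q sp * (u i j * psTime sp j) ≤ 2 * expectedUtility u q i := by
  set first : Fin n ≃ Fin n := Equiv.swap ⟨0, i.pos⟩ j
  have hfirst : IsBot (first.symm j) := fun r => by
    simp [first, Equiv.swap_apply_right, Fin.le_def]
  calc ∑ sp, q sp * (u i j * psTime sp j) = 2 * ∑ sp, q sp * (u i j * psTime sp j / 2) := by
        rw [mul_sum]
        exact sum_congr rfl fun sp _ => by ring
    _ ≤ 2 * expectedUtility u q i := by
        refine mul_le_mul_of_nonneg_left (hq.le_expectedUtility i first fun sp => ?_) two_pos.le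
        have hj : psProb (Function.update sp i first) i j =
            psTime (Function.update sp i first) j :=
          psProb_eq_psTime_of_isBot (by rwa [Function.update_self])
        have hdouble := psTime_le_two_mul_psTime (s' := Function.update sp i first) (i := i)
          (fun m hm => (Function.update_of_ne hm _ _).symm) j
        calc u i j * psTime sp j / 2 ≤ psProb (Function.update sp i first) i j * u i j := by
              rw [hj]
              nlinarith [(hu i).1 j]
          _ ≤ _ := single_le_sum (fun j' _ => mul_nonneg (psProb_nonneg i j') ((hu i).1 j'))
              (mem_univ j)

lemma _root_.PSCCE.one_le_expected_psSW (hu : ∀ i, UnitSum (u i)) (hq : PSCCE u q)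
    (hn : 0 < n) : 1 ≤ ∑ sp, q sp * psSW u sp := by
  rw [← sum_expectedUtility]
  calc (1 : ℝ) = ∑ _i : Fin n, (n : ℝ)⁻¹ := by
        rw [sum_const, card_univ, Fintype.card_fin, nsmul_eq_mul,
          mul_inv_cancel₀ (by exact_mod_cast hn.ne')]
    _ ≤ _ := sum_le_sum fun i _ => hq.inv_le_expectedUtility hu i

lemma sum_le_sqrt_mul_sum_mul_psTime_add_sqrt (hu : ∀ i, UnitSum (u i))
    (sp : Fin n → (Fin n ≃ Fin n)) (μ : Equiv.Perm (Fin n)) :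
    ∑ i, u i (μ i) ≤ √n * ∑ i, u i (μ i) * psTime sp (μ i) + √n := by
  rcases Nat.eq_zero_or_pos n with rfl | hn
  · simp
  have hc : 0 < (√n)⁻¹ := by positivity
  have hcard : (#{i | psTime sp (μ i) ≤ (√n)⁻¹} : ℝ) ≤ √n := by
    have : #{i | psTime sp (μ i) ≤ (√n)⁻¹} = #{j | psTime sp j ≤ (√n)⁻¹} := by
      simp only [card_filter]
      exact Equiv.sum_comp μ fun j => if psTime sp j ≤ (√n)⁻¹ then 1 else 0
    rw [this]
    calc (#{j | psTime sp j ≤ (√n)⁻¹} : ℝ) ≤ n * (√n)⁻¹ := card_filter_psTime_le_le_mul hc.le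
      _ = √n := by rw [← div_eq_mul_inv, Real.div_sqrt]
  have := sum_le_sum_mul_div_add_card hc (fun i => (hu i).1 (μ i)) (fun i => (hu i).le_one (μ i))
    fun i => (psTime_pos (s := sp) (μ i)).le
  rw [div_inv_eq_mul, mul_comm] at this
  linarith

end Welfare

end PS

open PS in
/-- The coarse correlated Price of Anarchy of Probabilistic Serial is `O(√n)`:
there is a universal constant `C > 0` such that for every `n`, every profile `u`
of unit-sum valuations and every coarse correlated equilibrium `q` of
Probabilistic Serial at `u`, `SW_OPT(u) ≤ C · √n · E_{s∼q}[SW_PS(u, s)]`. -/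
theorem ps_cce_poa_sqrt_n :
    ∃ C : ℝ, 0 < C ∧
      ∀ (n : ℕ) (u : Fin n → Fin n → ℝ) (q : (Fin n → (Fin n ≃ Fin n)) → ℝ),
        (∀ i, UnitSum (u i)) → PSCCE u q →
        SWopt u ≤ C * Real.sqrt n * ∑ sp, q sp * psSW u sp := by
  refine ⟨3, by norm_num, fun n u q hu hq => ?_⟩
  rcases Nat.eq_zero_or_pos n with rfl | hn
  · simp [SWopt]
  obtain ⟨μ, -, hμ⟩ := exists_mem_eq_sup' ⟨Equiv.refl (Fin n), mem_univ _⟩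
    fun μ : Equiv.Perm (Fin n) => ∑ i, u i (μ i)
  have hE := hq.one_le_expected_psSW hu hn
  have hsqrt : 0 ≤ √(n : ℝ) := Real.sqrt_nonneg _
  calc SWopt u = ∑ sp, q sp * ∑ i, u i (μ i) := by
        rw [SWopt, hμ, ← sum_mul, hq.2.1, one_mul]
    _ ≤ ∑ sp, q sp * (√n * ∑ i, u i (μ i) * psTime sp (μ i) + √n) :=
        sum_le_sum fun sp _ => mul_le_mul_of_nonneg_left
          (sum_le_sqrt_mul_sum_mul_psTime_add_sqrt hu sp μ) (hq.1 sp)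
    _ = √n * ∑ i, ∑ sp, q sp * (u i (μ i) * psTime sp (μ i)) + √n := by
        simp only [mul_add, sum_add_distrib, ← sum_mul, hq.2.1, one_mul,
          mul_sum, mul_left_comm (q _)]
        exact congrArg (· + _) sum_comm
    _ ≤ √n * ∑ i, 2 * expectedUtility u q i + √n := by
        gcongr with i
        exact hq.sum_mul_psTime_le_two_mul_expectedUtility hu i (μ i)
    _ = 2 * √n * ∑ sp, q sp * psSW u sp + √n := by
        rw [← mul_sum, sum_expectedUtility]
        ring
    _ ≤ 3 * √n * ∑ sp, q sp * psSW u sp := by nlinarith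
end

section
/- There is a universal constant C > 0 such that for every number of agents n, every profile D = (D_1, …, D_n) of independent finitely-supported distributions over unit-sum valuations, and every Bayes–Nash equilibrium q of Probabilistic Serial with respect to D, the expected equilibrium welfare satisfies E_{u∼D, s∼q(u)}[SW_PS(u,s)] ≥ (1/(C·√n))·E_{u∼D}[SW_OPT(u)]; i.e., the Bayesian Price of Anarchy of Probabilistic Serial is O(√n). -/
open Finset

theorem max_zero_min_sub_min_add {t Δ T A : ℝ} (hΔ : 0 ≤ Δ) (hT : t < T → t + Δ ≤ T)
    (hA : t < A → t + Δ ≤ A) :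
    max 0 (min (t + Δ) T - min (t + Δ) A) =
      max 0 (min t T - min t A) + if t < T ∧ A ≤ t then Δ else 0 := by
  by_cases h₁ : t < T <;> by_cases h₂ : A ≤ t
  · rw [if_pos ⟨h₁, h₂⟩, min_eq_left (hT h₁), min_eq_right (by linarith), min_eq_left h₁.le,
      min_eq_right h₂, max_eq_right (by linarith), max_eq_right (by linarith)]
    ring
  · rw [if_neg (by tauto), min_eq_left (hT h₁), min_eq_left (hA (not_le.1 h₂)), min_eq_left h₁.le,
      min_eq_left (not_le.1 h₂).le]
    simp
  · rw [if_neg (by tauto), not_lt.1 h₁ |> min_eq_right, min_eq_right (by linarith [not_lt.1 h₁]),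
      min_eq_right h₂, min_eq_right (by linarith), add_zero]
  · have h₁ := not_lt.1 h₁
    have h₂ := not_le.1 h₂
    rw [if_neg (by tauto), min_eq_right h₁, min_eq_right (by linarith), add_zero,
      min_eq_left (hA h₂), min_eq_left h₂.le, max_eq_left (by linarith),
      max_eq_left (by linarith)]

section Summation

variable {ι : Type*} [LinearOrder ι] {g b : ι → ℝ}

theorem mul_sum_le_sum_mul_of_antitone (hg : Antitone g) (s : Finset ι)
    (hb : ∀ i ∈ s, 0 ≤ ∑ k ∈ s with k ≤ i, b k) {y : ι} (hy : ∀ i ∈ s, i ≤ y) :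
    g y * ∑ i ∈ s, b i ≤ ∑ i ∈ s, g i * b i := by
  induction s using Finset.induction_on_max generalizing y with
  | empty => simp
  | insert a s ha ih =>
    have has : a ∉ s := fun h => lt_irrefl a (ha a h)
    have hfilter : ∀ i ∈ s, {k ∈ insert a s | k ≤ i} = {k ∈ s | k ≤ i} := fun i hi => by
      rw [filter_insert, if_neg (not_le.2 (ha i hi))]
    have hs := ih (fun i hi => hfilter i hi ▸ hb i (mem_insert_of_mem hi)) fun i hi => (ha i hi).le
    have htotal : 0 ≤ ∑ k ∈ insert a s, b k := by
      simpa [filter_true_of_mem fun i hi => (mem_insert.1 hi).elim le_of_eq fun h => (ha i h).le]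
        using hb a (mem_insert_self a s)
    rw [sum_insert has, sum_insert has] at *
    nlinarith [hg (hy a (mem_insert_self a s))]

theorem sum_mul_nonneg_of_antitone (hg : Antitone g) (hg0 : ∀ i, 0 ≤ g i) (s : Finset ι)
    (hb : ∀ i ∈ s, 0 ≤ ∑ k ∈ s with k ≤ i, b k) : 0 ≤ ∑ i ∈ s, g i * b i := by
  rcases s.eq_empty_or_nonempty with rfl | hs
  · simp
  have hmax : ∀ i ∈ s, i ≤ s.max' hs := fun i hi => le_max' s i hi
  have htotal : 0 ≤ ∑ i ∈ s, b i := by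
    simpa [filter_true_of_mem hmax] using hb _ (max'_mem s hs)
  exact (mul_nonneg (hg0 _) htotal).trans (mul_sum_le_sum_mul_of_antitone hg s hb hmax)

theorem sum_mul_sum_mul_sum_comm {β γ κ : Type*} (s : Finset β) (t : Finset γ) (w : Finset κ)
    (a : β → ℝ) (b : β → γ → ℝ) (h : κ → β → γ → ℝ) :
    ∑ x ∈ s, a x * ∑ y ∈ t, b x y * ∑ k ∈ w, h k x y =
      ∑ k ∈ w, ∑ x ∈ s, a x * ∑ y ∈ t, b x y * h k x y := by
  simp only [mul_sum]
  calc _ = ∑ x ∈ s, ∑ k ∈ w, ∑ y ∈ t, a x * (b x y * h k x y) :=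
        sum_congr rfl fun _ _ => sum_comm
    _ = _ := sum_comm

end Summation

section ProductMeasure

variable {ι α R : Type*} [Fintype ι] [DecidableEq ι] [CommSemiring R]

theorem sum_piFinset_prod_mul_eq (S : ι → Finset α) (D : ι → α → R) (i : ι) (f : (ι → α) → R) :
    ∑ u ∈ Fintype.piFinset S, (∏ m, D m (u m)) * f u =
      ∑ v ∈ S i, D i v * ∑ u ∈ Fintype.piFinset (Function.update S i {v}),
        (∏ m ∈ univ.erase i, D m (u m)) * f u := by
  classical
  rw [← sum_fiberwise_of_maps_to (g := fun u => u i) (t := S i)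
    fun u hu => Fintype.mem_piFinset.1 hu i]
  refine sum_congr rfl fun v hv => ?_
  rw [← Fintype.piFinset_update_singleton_eq_filter_piFinset_eq S i hv, mul_sum]
  refine sum_congr rfl fun u hu => ?_
  have hui : u i = v := by simpa using Fintype.mem_piFinset.1 hu i
  rw [← mul_prod_erase univ (fun m => D m (u m)) (mem_univ i), hui, mul_assoc]

theorem mem_piFinset_of_mem_piFinset_update {S : ι → Finset α} {i : ι} {v : α} (hv : v ∈ S i)
    {u : ι → α} (hu : u ∈ Fintype.piFinset (Function.update S i {v})) :
    u ∈ Fintype.piFinset S ∧ u i = v := by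
  classical
  simpa [Fintype.piFinset_update_singleton_eq_filter_piFinset_eq S i hv] using hu

end ProductMeasure

section MinRatio

variable {ι : Type*} (F : Finset ι) (x : ι → ℝ) (c : ι → ℕ)

/-- The length `Δ` of a phase of `psStep`, with `x = rem` and `c j` the number of agents eating
`j`. -/
noncomputable def minRatio : ℝ :=
  sInf {y : ℝ | ∃ j ∈ F, 0 < c j ∧ y = x j / c j}

variable {F x c}

theorem minRatio_candidates_nonempty (hc : ∃ j ∈ F, 0 < c j) :
    ((F.filter (0 < c ·)).image (fun j => x j / c j)).Nonempty := by
  obtain ⟨j, hj, hcj⟩ := hc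
  exact ⟨_, mem_image_of_mem _ (mem_filter.2 ⟨hj, hcj⟩)⟩

theorem minRatio_eq_min' (hc : ∃ j ∈ F, 0 < c j) :
    minRatio F x c =
      ((F.filter (0 < c ·)).image (fun j => x j / c j)).min' (minRatio_candidates_nonempty hc) := by
  rw [← Finset.Nonempty.csInf_eq_min', minRatio]
  congr 1
  ext y
  simp only [Set.mem_ofPred_eq, coe_image, coe_filter, Set.mem_image]
  constructor
  · rintro ⟨j, hj, hcj, rfl⟩; exact ⟨j, ⟨hj, hcj⟩, rfl⟩
  · rintro ⟨j, ⟨hj, hcj⟩, rfl⟩; exact ⟨j, hj, hcj, rfl⟩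

theorem minRatio_pos (hx : ∀ j ∈ F, 0 < x j) (hc : ∃ j ∈ F, 0 < c j) : 0 < minRatio F x c := by
  rw [minRatio_eq_min' hc, lt_min'_iff]
  simp only [mem_image, mem_filter]
  rintro _ ⟨j, ⟨hj, hcj⟩, rfl⟩
  exact div_pos (hx j hj) (by exact_mod_cast hcj)

theorem mul_minRatio_le (hx : ∀ j ∈ F, 0 < x j) (hc : ∃ j ∈ F, 0 < c j) {j : ι} (hj : j ∈ F) :
    c j * minRatio F x c ≤ x j := by
  rcases (c j).eq_zero_or_pos with hcj | hcj
  · simpa [hcj] using (hx j hj).le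
  · have hcj' : (0 : ℝ) < c j := by exact_mod_cast hcj
    rw [← le_div_iff₀' hcj', minRatio_eq_min' hc]
    exact min'_le _ _ (mem_image_of_mem _ (mem_filter.2 ⟨hj, hcj⟩))

theorem exists_mul_minRatio_eq (hc : ∃ j ∈ F, 0 < c j) :
    ∃ j ∈ F, c j * minRatio F x c = x j := by
  have hmem := min'_mem _ (minRatio_candidates_nonempty (x := x) hc)
  rw [← minRatio_eq_min' hc] at hmem
  obtain ⟨j, hj, hjeq⟩ := mem_image.1 hmem
  obtain ⟨hjF, hcj⟩ := mem_filter.1 hj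
  refine ⟨j, hjF, ?_⟩
  rw [← hjeq]
  field_simp

end MinRatio

/-- Split the agents at `T (μ i) = 1/√n`: a late one has `x i ≤ 2√n · x i T (μ i) / 2`; there are
at most `√n` early ones, each with `x i ≤ 1`, while the guarantees sum to at least `∑ 1/n = 1`. -/
theorem sum_le_three_sqrt_mul_sum_max {n : ℕ} (hn : 0 < n) {T : Fin n → ℝ}
    (hT : ∀ t, 0 ≤ t → ((univ.filter fun j => T j < t).card : ℝ) ≤ n * t) (μ : Equiv.Perm (Fin n))
    {x : Fin n → ℝ} (hx0 : ∀ i, 0 ≤ x i) (hx1 : ∀ i, x i ≤ 1) :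
    ∑ i, x i ≤ 3 * √n * ∑ i, max (1 / (n : ℝ)) (x i * T (μ i) / 2) := by
  set M := ∑ i, max (1 / (n : ℝ)) (x i * T (μ i) / 2)
  have hn' : (0 : ℝ) < n := by exact_mod_cast hn
  have hsq : 0 < √(n : ℝ) := Real.sqrt_pos.2 hn'
  have hM : 1 ≤ M := calc
    (1 : ℝ) = ∑ _i : Fin n, 1 / (n : ℝ) := by simp [hn'.ne']
    _ ≤ M := sum_le_sum fun i _ => le_max_left _ _
  rw [← sum_filter_add_sum_filter_not univ fun i => 1 / √(n : ℝ) ≤ T (μ i)]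
  have hlate : ∑ i ∈ univ with 1 / √(n : ℝ) ≤ T (μ i), x i ≤ 2 * √n * M := by
    rw [mul_sum]
    refine (sum_le_sum fun i hi => ?_).trans
      (sum_le_sum_of_subset_of_nonneg (filter_subset _ _) fun i _ _ => by positivity)
    have hi := (div_le_iff₀ hsq).1 (mem_filter.1 hi).2
    nlinarith [le_max_right (1 / (n : ℝ)) (x i * T (μ i) / 2), hx0 i]
  have hearly : ∑ i ∈ univ with ¬ 1 / √(n : ℝ) ≤ T (μ i), x i ≤ √n * M := calc
    _ ≤ ((univ.filter fun i => ¬ 1 / √(n : ℝ) ≤ T (μ i)).card : ℝ) := by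
        simpa using sum_le_sum fun i (_ : i ∈ univ.filter _) => hx1 i
    _ ≤ ((univ.filter fun j => T j < 1 / √(n : ℝ)).card : ℝ) := by
        exact_mod_cast card_le_card_of_injOn μ (fun i hi => by simpa using hi) μ.injective.injOn
    _ ≤ n * (1 / √(n : ℝ)) := hT _ (by positivity)
    _ = √n := by field_simp; rw [Real.sq_sqrt hn'.le]
    _ ≤ √n * M := le_mul_of_one_le_right hsq.le hM
  linarith

namespace ProbabilisticSerial

variable {n : ℕ}

noncomputable def avail (st : PSState n) : Finset (Fin n) :=
  univ.filter (fun j => 0 < st.rem j)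

def eaters (top : Fin n → Fin n) (j : Fin n) : ℕ :=
  (univ.filter (fun i => top i = j)).card

structure IsPhase (s : Fin n → (Fin n ≃ Fin n)) (st st' : PSState n) (top : Fin n → Fin n)
    (Δ : ℝ) : Prop where
  top_mem : ∀ i, top i ∈ avail st
  top_le : ∀ i, ∀ j ∈ avail st, (s i).symm (top i) ≤ (s i).symm j
  pos : 0 < Δ
  eaten_le : ∀ j ∈ avail st, eaters top j * Δ ≤ st.rem j
  exhausts : ∃ j ∈ avail st, st'.rem j = 0
  rem_eq : ∀ j, st'.rem j = st.rem j - eaters top j * Δ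
  cons_eq : ∀ i j, st'.cons i j = st.cons i j + if top i = j then Δ else 0
  time_eq : st'.time = st.time + Δ
  fin_eq : ∀ j, st'.fin j =
    if 0 < st.rem j ∧ st.rem j - eaters top j * Δ ≤ 0 then st.time + Δ else st.fin j

theorem psStep_of_not_nonempty {s : Fin n → (Fin n ≃ Fin n)} {st : PSState n}
    (h : ¬ (avail st).Nonempty) : psStep s st = st := by
  rw [psStep]
  exact dif_neg h

theorem exists_isPhase (s : Fin n → (Fin n ≃ Fin n)) {st : PSState n} (h : (avail st).Nonempty) :
    ∃ top Δ, IsPhase s st (psStep s st) top Δ := by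
  have hR : ∀ i, (univ.filter (fun r => s i r ∈ avail st)).Nonempty := fun i =>
    let ⟨j, hj⟩ := h; ⟨(s i).symm j, by simpa using hj⟩
  set top : Fin n → Fin n := fun i =>
    if hR : (univ.filter (fun r => s i r ∈ avail st)).Nonempty then
      s i ((univ.filter (fun r => s i r ∈ avail st)).min' hR)
    else h.choose with htop_def
  have htop : ∀ i, top i ∈ avail st ∧ ∀ j ∈ avail st, (s i).symm (top i) ≤ (s i).symm j := by
    intro i
    simp only [htop_def, dif_pos (hR i), Equiv.symm_apply_apply]
    exact ⟨(mem_filter.1 (min'_mem _ (hR i))).2, fun j hj => min'_le _ _ (by simpa using hj)⟩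
  have hrem : ∀ j ∈ avail st, 0 < st.rem j := fun j hj => (mem_filter.1 hj).2
  obtain ⟨i₀⟩ : Nonempty (Fin n) := ⟨h.choose⟩
  have heaten : ∃ j ∈ avail st, 0 < eaters top j :=
    ⟨top i₀, (htop i₀).1, card_pos.2 ⟨i₀, by simp⟩⟩
  have hstep : psStep s st =
      { rem := fun j => st.rem j - eaters top j * minRatio (avail st) st.rem (eaters top)
        cons := fun i j => st.cons i j +
          if top i = j then minRatio (avail st) st.rem (eaters top) else 0
        time := st.time + minRatio (avail st) st.rem (eaters top)
        fin := fun j =>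
          if 0 < st.rem j ∧ st.rem j - eaters top j * minRatio (avail st) st.rem (eaters top) ≤ 0
          then st.time + minRatio (avail st) st.rem (eaters top) else st.fin j } := by
    rw [psStep]
    exact dif_pos h
  obtain ⟨j₀, hj₀, hj₀eq⟩ := exists_mul_minRatio_eq (x := st.rem) heaten
  refine ⟨top, minRatio (avail st) st.rem (eaters top), fun i => (htop i).1, fun i => (htop i).2,
    minRatio_pos hrem heaten, fun j hj => mul_minRatio_le hrem heaten hj,
    ⟨j₀, hj₀, by rw [hstep]; simp [hj₀eq]⟩, ?_, ?_, ?_, ?_⟩ <;> simp [hstep]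

theorem sum_eaters (top : Fin n → Fin n) : ∑ j, (eaters top j : ℝ) = n := by
  have := card_eq_sum_card_fiberwise (s := univ) (t := univ) (f := top) fun i _ => mem_univ _
  simp only [card_univ, Fintype.card_fin] at this
  exact_mod_cast this.symm

structure Valid (st : PSState n) : Prop where
  rem_nonneg : ∀ j, 0 ≤ st.rem j
  rem_le_one : ∀ j, st.rem j ≤ 1
  sum_rem : ∑ j, st.rem j = n * (1 - st.time)
  sum_cons : ∀ j, ∑ i, st.cons i j = 1 - st.rem j

namespace IsPhase

variable {s : Fin n → (Fin n ≃ Fin n)} {st st' : PSState n} {top : Fin n → Fin n} {Δ : ℝ}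

theorem eaters_eq_zero (hφ : IsPhase s st st' top Δ) {j : Fin n} (hj : j ∉ avail st) :
    eaters top j = 0 :=
  card_eq_zero.2 (filter_eq_empty_iff.2 fun i _ hi => hj (hi ▸ hφ.top_mem i))

theorem rem_le (hφ : IsPhase s st st' top Δ) (j : Fin n) : st'.rem j ≤ st.rem j := by
  rw [hφ.rem_eq]
  linarith [mul_nonneg (Nat.cast_nonneg (α := ℝ) (eaters top j)) hφ.pos.le]

theorem rem_nonneg (hφ : IsPhase s st st' top Δ) (h : ∀ j, 0 ≤ st.rem j) (j : Fin n) :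
    0 ≤ st'.rem j := by
  rw [hφ.rem_eq]
  by_cases hj : j ∈ avail st
  · linarith [hφ.eaten_le j hj]
  · simpa [hφ.eaters_eq_zero hj] using h j

theorem card_avail_lt (hφ : IsPhase s st st' top Δ) : (avail st').card < (avail st).card := by
  obtain ⟨j₀, hj₀, hj₀'⟩ := hφ.exhausts
  refine card_lt_card ⟨fun j hj => ?_, fun hsub => ?_⟩
  · simp only [avail, mem_filter, mem_univ, true_and] at hj ⊢
    exact hj.trans_le (hφ.rem_le j)
  · simpa [avail, hj₀'] using hsub hj₀

theorem fin_of_rem_eq_zero (hφ : IsPhase s st st' top Δ) {j : Fin n} (hj : st'.rem j = 0)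
    (hj₀ : 0 < st.rem j) : st'.fin j = st'.time := by
  rw [hφ.fin_eq, hφ.time_eq, if_pos ⟨hj₀, (hφ.rem_eq j ▸ hj).le⟩]

theorem valid (hφ : IsPhase s st st' top Δ) (h : Valid st) : Valid st' where
  rem_nonneg := hφ.rem_nonneg h.rem_nonneg
  rem_le_one j := (hφ.rem_le j).trans (h.rem_le_one j)
  sum_rem := by
    simp only [hφ.rem_eq, hφ.time_eq, sum_sub_distrib, h.sum_rem, ← sum_mul, sum_eaters]
    ring
  sum_cons j := by
    simp only [hφ.cons_eq, hφ.rem_eq, sum_add_distrib, h.sum_cons, ← sum_filter, sum_const,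
      nsmul_eq_mul, eaters]
    ring

end IsPhase

section Eating

variable (s : Fin n → (Fin n ≃ Fin n))

theorem psStep_rem_le (st : PSState n) (j : Fin n) : (psStep s st).rem j ≤ st.rem j := by
  by_cases h : (avail st).Nonempty
  · obtain ⟨top, Δ, hφ⟩ := exists_isPhase s h
    exact hφ.rem_le j
  · rw [psStep_of_not_nonempty h]

theorem psStep_time_le (st : PSState n) : st.time ≤ (psStep s st).time := by
  by_cases h : (avail st).Nonempty
  · obtain ⟨top, Δ, hφ⟩ := exists_isPhase s h
    linarith [hφ.time_eq, hφ.pos]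
  · rw [psStep_of_not_nonempty h]

theorem psStep_time_lt {st : PSState n} (h : (avail st).Nonempty) :
    st.time < (psStep s st).time := by
  obtain ⟨top, Δ, hφ⟩ := exists_isPhase s h
  linarith [hφ.time_eq, hφ.pos]

theorem psStep_valid {st : PSState n} (h : Valid st) : Valid (psStep s st) := by
  by_cases hne : (avail st).Nonempty
  · obtain ⟨top, Δ, hφ⟩ := exists_isPhase s hne
    exact hφ.valid h
  · rwa [psStep_of_not_nonempty hne]

theorem psStep_of_rem_eq_zero {st : PSState n} {j : Fin n} (hj : st.rem j = 0) :
    (psStep s st).rem j = 0 ∧ (psStep s st).fin j = st.fin j := by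
  by_cases h : (avail st).Nonempty
  · obtain ⟨top, Δ, hφ⟩ := exists_isPhase s h
    have hj' : j ∉ avail st := by simp [avail, hj]
    simp [hφ.rem_eq, hφ.fin_eq, hφ.eaters_eq_zero hj', hj]
  · rw [psStep_of_not_nonempty h]
    exact ⟨hj, rfl⟩

theorem psStep_fin_of_rem_eq_zero {st : PSState n} {j : Fin n} (hj : (psStep s st).rem j = 0)
    (hj₀ : 0 < st.rem j) : (psStep s st).fin j = (psStep s st).time := by
  obtain ⟨top, Δ, hφ⟩ := exists_isPhase s ⟨j, by simpa [avail] using hj₀⟩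
  exact hφ.fin_of_rem_eq_zero hj hj₀

def psInit : PSState n := ⟨fun _ => 1, fun _ _ => 0, 0, fun _ => 1⟩

noncomputable def psState (k : ℕ) : PSState n := (psStep s)^[k] psInit

theorem psState_zero : psState s 0 = psInit := rfl

theorem psState_succ (k : ℕ) : psState s (k + 1) = psStep s (psState s k) :=
  Function.iterate_succ_apply' _ _ _

theorem psState_valid (k : ℕ) : Valid (psState s k) := by
  induction k with
  | zero => exact ⟨fun _ => zero_le_one, fun _ => le_rfl, by simp [psState_zero, psInit],
      fun _ => by simp [psState_zero, psInit]⟩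
  | succ k ih => exact psState_succ s k ▸ psStep_valid s ih

theorem monotone_psState_time : Monotone fun k => (psState s k).time :=
  monotone_nat_of_le_succ fun k => psState_succ s k ▸ psStep_time_le s _

theorem psState_time_nonneg (k : ℕ) : 0 ≤ (psState s k).time :=
  monotone_psState_time s (Nat.zero_le k)

theorem antitone_psState_rem (j : Fin n) : Antitone fun k => (psState s k).rem j :=
  antitone_nat_of_succ_le fun k => psState_succ s k ▸ psStep_rem_le s _ j

theorem psState_of_rem_eq_zero {k k' : ℕ} (hkk' : k ≤ k') {j : Fin n}
    (hj : (psState s k).rem j = 0) :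
    (psState s k').rem j = 0 ∧ (psState s k').fin j = (psState s k).fin j := by
  induction k', hkk' using Nat.le_induction with
  | base => exact ⟨hj, rfl⟩
  | succ k' _ ih =>
    rw [psState_succ]
    obtain ⟨h₁, h₂⟩ := psStep_of_rem_eq_zero s ih.1
    exact ⟨h₁, h₂.trans ih.2⟩

theorem card_avail_psState_le (k : ℕ) : (avail (psState s k)).card ≤ n - k := by
  induction k with
  | zero => simpa using card_le_univ (avail (psState s 0))
  | succ k ih =>
    by_cases h : (avail (psState s k)).Nonempty
    · obtain ⟨top, Δ, hφ⟩ := exists_isPhase s h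
      have := hφ.card_avail_lt
      rw [← psState_succ] at this
      omega
    · rw [psState_succ, psStep_of_not_nonempty h]
      simp [not_nonempty_iff_eq_empty.1 h]

theorem psState_rem_eq_zero (j : Fin n) : (psState s n).rem j = 0 := by
  have hempty : avail (psState s n) = ∅ := card_eq_zero.1 (by simpa using card_avail_psState_le s n)
  have : ¬ 0 < (psState s n).rem j := by simpa [avail] using congrArg (j ∈ ·) hempty
  exact le_antisymm (not_lt.1 this) ((psState_valid s n).rem_nonneg j)

theorem psState_time_eq_one (hn : 0 < n) : (psState s n).time = 1 := by
  have h := (psState_valid s n).sum_rem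
  simp only [psState_rem_eq_zero, sum_const_zero] at h
  have hn' : (n : ℝ) ≠ 0 := by positivity
  linarith [(mul_eq_zero.1 h.symm).resolve_left hn']

theorem exists_rem_eq_zero_succ (j : Fin n) :
    ∃ m < n, 0 < (psState s m).rem j ∧ (psState s (m + 1)).rem j = 0 := by
  by_contra! h
  have hpos : ∀ k ≤ n, 0 < (psState s k).rem j := by
    intro k hk
    induction k with
    | zero => simp [psState_zero, psInit]
    | succ k ih =>
      exact lt_of_le_of_ne ((psState_valid s _).rem_nonneg j)
        (h k (by omega) (ih (by omega))).symm
  simpa [psState_rem_eq_zero] using hpos n le_rfl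

theorem psTime_eq_of_rem_eq_zero {m : ℕ} {j : Fin n} (hm : 0 < (psState s m).rem j)
    (hm' : (psState s (m + 1)).rem j = 0) : psTime s j = (psState s (m + 1)).time := by
  have hmn : m + 1 ≤ n := by
    by_contra! h
    linarith [antitone_psState_rem s j (show n ≤ m by omega), psState_rem_eq_zero s j]
  change (psState s n).fin j = _
  rw [(psState_of_rem_eq_zero s hmn hm').2, psState_succ,
    psStep_fin_of_rem_eq_zero s (psState_succ s m ▸ hm') hm]

theorem rem_pos_iff_time_lt_psTime (k : ℕ) (j : Fin n) :
    0 < (psState s k).rem j ↔ (psState s k).time < psTime s j := by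
  obtain ⟨m, -, hm, hm'⟩ := exists_rem_eq_zero_succ s j
  rw [psTime_eq_of_rem_eq_zero s hm hm']
  constructor
  · intro hk
    have hkm : k ≤ m := by
      by_contra! h
      linarith [antitone_psState_rem s j (show m + 1 ≤ k by omega)]
    calc (psState s k).time ≤ (psState s m).time := monotone_psState_time s hkm
      _ < (psState s (m + 1)).time := psState_succ s m ▸
        psStep_time_lt s ⟨j, by simpa [avail] using hm⟩
  · intro hk
    have hkm : k ≤ m := by
      by_contra! h
      linarith [monotone_psState_time s (show m + 1 ≤ k by omega)]
    exact hm.trans_le (antitone_psState_rem s j hkm)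

theorem time_succ_le_psTime {k : ℕ} {j : Fin n} (hj : 0 < (psState s k).rem j) :
    (psState s (k + 1)).time ≤ psTime s j := by
  obtain ⟨m, -, hm, hm'⟩ := exists_rem_eq_zero_succ s j
  rw [psTime_eq_of_rem_eq_zero s hm hm']
  refine monotone_psState_time s (Nat.succ_le_succ ?_)
  by_contra! h
  linarith [antitone_psState_rem s j (show m + 1 ≤ k by omega)]

theorem psTime_pos (j : Fin n) : 0 < psTime s j :=
  (rem_pos_iff_time_lt_psTime s 0 j).1 (by simp [psState_zero, psInit])

theorem psTime_le_one (hn : 0 < n) (j : Fin n) : psTime s j ≤ 1 := by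
  obtain ⟨m, hmn, hm, hm'⟩ := exists_rem_eq_zero_succ s j
  rw [psTime_eq_of_rem_eq_zero s hm hm', ← psState_time_eq_one s hn]
  exact monotone_psState_time s hmn

theorem card_rem_eq_zero_le (k : ℕ) :
    ((univ.filter fun j => (psState s k).rem j = 0).card : ℝ) ≤ n * (psState s k).time := by
  have hv := psState_valid s k
  calc ((univ.filter fun j => (psState s k).rem j = 0).card : ℝ)
      = ∑ j ∈ univ.filter (fun j => (psState s k).rem j = 0), (1 - (psState s k).rem j) := by
        rw [sum_congr rfl fun j hj => by rw [(mem_filter.1 hj).2, sub_zero]]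
        simp
    _ ≤ ∑ j, (1 - (psState s k).rem j) :=
        sum_le_sum_of_subset_of_nonneg (filter_subset _ _)
          fun j _ _ => sub_nonneg.2 (hv.rem_le_one j)
    _ = n * (psState s k).time := by
        rw [sum_sub_distrib, hv.sum_rem]
        simp only [sum_const, card_univ, Fintype.card_fin, nsmul_eq_mul, mul_one]
        ring

/-- The agents eat at total rate `n`. -/
theorem card_psTime_le {t : ℝ} (ht : 0 ≤ t) :
    ((univ.filter fun j => psTime s j ≤ t).card : ℝ) ≤ n * t := by
  set K := (range (n + 1)).filter fun k => (psState s k).time ≤ t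
  have hK : K.Nonempty := ⟨0, by simp [K, psState_zero, psInit, ht]⟩
  have hk := (mem_filter.1 (K.max'_mem hK)).2
  have hsub : (univ.filter fun j => psTime s j ≤ t) ⊆
      univ.filter fun j => (psState s (K.max' hK)).rem j = 0 := by
    intro j hj
    obtain ⟨m, hmn, hm, hm'⟩ := exists_rem_eq_zero_succ s j
    have hjt := (mem_filter.1 hj).2
    rw [psTime_eq_of_rem_eq_zero s hm hm'] at hjt
    have hmK : m + 1 ≤ K.max' hK := K.le_max' _ (by simp [K, hjt]; omega)
    simpa using (psState_of_rem_eq_zero s hmK hm').1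
  calc ((univ.filter fun j => psTime s j ≤ t).card : ℝ)
      ≤ (univ.filter fun j => (psState s (K.max' hK)).rem j = 0).card := by
        exact_mod_cast card_le_card hsub
    _ ≤ n * (psState s (K.max' hK)).time := card_rem_eq_zero_le s _
    _ ≤ n * t := by gcongr

theorem card_psTime_lt {t : ℝ} (ht : 0 ≤ t) :
    ((univ.filter fun j => psTime s j < t).card : ℝ) ≤ n * t := by
  rcases (univ.filter fun j => psTime s j < t).eq_empty_or_nonempty with h | h
  · rw [h, card_empty, Nat.cast_zero]
    positivity
  obtain ⟨j₁, hj₁, hmax⟩ := exists_max_image _ (psTime s) h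
  calc ((univ.filter fun j => psTime s j < t).card : ℝ)
      ≤ (univ.filter fun j => psTime s j ≤ psTime s j₁).card := by
        exact_mod_cast card_le_card fun j hj => by simpa using hmax j hj
    _ ≤ n * psTime s j₁ := card_psTime_le s (psTime_pos s j₁).le
    _ ≤ n * t := by gcongr; exact ((mem_filter.1 hj₁).2).le

/-- The time at which agent `i`, eating along her report, reaches item `j`. -/
noncomputable def psArrival (i j : Fin n) : ℝ :=
  (insert 0 ((univ.filter fun k => (s i).symm k < (s i).symm j).image (psTime s))).max'
    (insert_nonempty _ _)

variable {s}

theorem psArrival_nonneg (i j : Fin n) : 0 ≤ psArrival s i j :=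
  le_max' _ _ (mem_insert_self _ _)

theorem psTime_le_psArrival {i j k : Fin n} (hk : (s i).symm k < (s i).symm j) :
    psTime s k ≤ psArrival s i j :=
  le_max' _ _ (mem_insert_of_mem (mem_image_of_mem _ (by simp [hk])))

theorem psArrival_le {i j : Fin n} {c : ℝ} (hc : 0 ≤ c)
    (h : ∀ k, (s i).symm k < (s i).symm j → psTime s k ≤ c) : psArrival s i j ≤ c := by
  refine max'_le _ _ _ fun y hy => ?_
  rcases mem_insert.1 hy with rfl | hy
  · exact hc
  · obtain ⟨k, hk, rfl⟩ := mem_image.1 hy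
    exact h k (mem_filter.1 hk).2

theorem psArrival_eq_zero_or (i j : Fin n) :
    psArrival s i j = 0 ∨ ∃ k, (s i).symm k < (s i).symm j ∧ psArrival s i j = psTime s k := by
  rcases mem_insert.1 (max'_mem _ (insert_nonempty (0 : ℝ)
    ((univ.filter fun k => (s i).symm k < (s i).symm j).image (psTime s)))) with h | h
  · exact Or.inl h
  · obtain ⟨k, hk, hke⟩ := mem_image.1 h
    exact Or.inr ⟨k, (mem_filter.1 hk).2, hke.symm⟩

theorem top_eq_iff {k : ℕ} {top : Fin n → Fin n} {Δ : ℝ}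
    (hφ : IsPhase s (psState s k) (psState s (k + 1)) top Δ) (i j : Fin n) :
    top i = j ↔ (psState s k).time < psTime s j ∧ psArrival s i j ≤ (psState s k).time := by
  have havail : ∀ j, j ∈ avail (psState s k) ↔ (psState s k).time < psTime s j := fun j => by
    simp [avail, rem_pos_iff_time_lt_psTime]
  constructor
  · rintro rfl
    refine ⟨(havail _).1 (hφ.top_mem i), psArrival_le (psState_time_nonneg s k) fun k' hk' => ?_⟩
    by_contra! h
    exact absurd (hφ.top_le i k' ((havail k').2 h)) (not_le.2 hk')
  · rintro ⟨hj, hA⟩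
    rcases (hφ.top_le i j ((havail j).2 hj)).lt_or_eq with hlt | heq
    · have := (havail _).1 (hφ.top_mem i)
      linarith [psTime_le_psArrival hlt]
    · exact (s i).symm.injective heq

theorem psState_cons_eq (k : ℕ) (i j : Fin n) :
    (psState s k).cons i j =
      max 0 (min (psState s k).time (psTime s j) - min (psState s k).time (psArrival s i j)) := by
  induction k with
  | zero =>
    simp [psState_zero, psInit, (psTime_pos s j).le, psArrival_nonneg]
  | succ k ih =>
    by_cases h : (avail (psState s k)).Nonempty
    · obtain ⟨top, Δ, hφ⟩ := exists_isPhase s h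
      rw [← psState_succ] at hφ
      have hlt : ∀ j, (psState s k).time < psTime s j →
          (psState s k).time + Δ ≤ psTime s j := fun j hj => by
        simpa [hφ.time_eq] using time_succ_le_psTime s ((rem_pos_iff_time_lt_psTime s k j).2 hj)
      have hA : (psState s k).time < psArrival s i j →
          (psState s k).time + Δ ≤ psArrival s i j := by
        intro hA
        rcases psArrival_eq_zero_or i j with h0 | ⟨k', -, hk'⟩
        · linarith [psState_time_nonneg s k]
        · rw [hk'] at hA ⊢
          exact hlt k' hA
      rw [hφ.cons_eq, ih, hφ.time_eq, max_zero_min_sub_min_add hφ.pos.le (hlt j) hA]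
      simp only [top_eq_iff hφ]
    · rwa [psState_succ, psStep_of_not_nonempty h]

theorem psProb_eq_max (i j : Fin n) :
    psProb s i j = max 0 (min (psState s n).time (psTime s j) -
      min (psState s n).time (psArrival s i j)) :=
  psState_cons_eq n i j

theorem psProb_eq (hn : 0 < n) (i j : Fin n) :
    psProb s i j = max 0 (psTime s j - psArrival s i j) := by
  rw [psProb_eq_max, psState_time_eq_one s hn, min_eq_right (psTime_le_one s hn j),
    min_eq_right (psArrival_le zero_le_one fun k _ => psTime_le_one s hn k)]

theorem psProb_nonneg (i j : Fin n) : 0 ≤ psProb s i j :=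
  psProb_eq_max i j ▸ le_max_left _ _

theorem psProb_le_psTime (i j : Fin n) : psProb s i j ≤ psTime s j := by
  rw [psProb_eq_max]
  refine max_le (psTime_pos s j).le ?_
  linarith [min_le_right (psState s n).time (psTime s j),
    le_min (psState_time_nonneg s n) (psArrival_nonneg (s := s) i j)]

theorem sub_psArrival_le_psProb (hn : 0 < n) (i j : Fin n) :
    psTime s j - psArrival s i j ≤ psProb s i j :=
  psProb_eq hn i j ▸ le_max_right _ _

theorem sum_psProb (j : Fin n) : ∑ i, psProb s i j = 1 := by
  change ∑ i, (psState s n).cons i j = 1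
  simpa [psState_rem_eq_zero] using (psState_valid s n).sum_cons j

theorem two_mul_psProb_update_le (hn : 0 < n) {i m : Fin n} (hm : m ≠ i) (σ : Fin n ≃ Fin n)
    {j : Fin n}
    (hbefore : ∀ k, psTime (Function.update s i σ) k < psTime (Function.update s i σ) j →
      psTime s k ≤ 2 * psTime (Function.update s i σ) k)
    (hj : 2 * psTime (Function.update s i σ) j ≤ psTime s j) :
    2 * psProb (Function.update s i σ) m j ≤ psProb s m j := by
  set s' := Function.update s i σ
  have hrank : (s' m).symm = (s m).symm := by rw [show s' m = s m from Function.update_of_ne hm _ _]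
  by_cases hA : psTime s' j ≤ psArrival s' m j
  · rw [psProb_eq hn m j, max_eq_left (by linarith)]
    linarith [psProb_nonneg (s := s) m j]
  · have hA2 : psArrival s m j ≤ 2 * psArrival s' m j := by
      refine psArrival_le (by linarith [psArrival_nonneg (s := s') m j]) fun k hk => ?_
      have hk' : psTime s' k ≤ psArrival s' m j := psTime_le_psArrival (hrank ▸ hk)
      linarith [hbefore k (by linarith)]
    rw [psProb_eq hn m j, max_eq_right (by linarith)]
    linarith [sub_psArrival_le_psProb (s := s) hn m j]

/-- Induction along the order of the finishing times after the deviation: if `j` finished more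
than twice as early after it, every other agent would get at most half as much of `j` as before,
and the deviator at most its finishing time, so `j` would not be used up. -/
theorem psTime_le_two_mul_psTime_update (hn : 0 < n) (s : Fin n → (Fin n ≃ Fin n)) (i : Fin n)
    (σ : Fin n ≃ Fin n) (j : Fin n) : psTime s j ≤ 2 * psTime (Function.update s i σ) j := by
  set s' := Function.update s i σ
  induction j using (Finite.wellFounded_of_trans_of_irrefl (InvImage (· < ·) (psTime s'))).induction
    with | _ j ih => ?_
  by_contra! hj
  have hothers : ∑ m ∈ univ.erase i, 2 * psProb s' m j ≤ ∑ m ∈ univ.erase i, psProb s m j :=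
    sum_le_sum fun m hm => two_mul_psProb_update_le hn (ne_of_mem_erase hm) σ ih hj.le
  have hsum' := add_sum_erase univ (fun m => psProb s' m j) (mem_univ i)
  have hsum := add_sum_erase univ (fun m => psProb s m j) (mem_univ i)
  rw [sum_psProb] at hsum' hsum
  rw [← mul_sum] at hothers
  linarith [psProb_le_psTime (s := s') i j, psProb_nonneg (s := s) i j, psTime_le_one s hn j]

theorem psTime_le_sum_psProb_Iic (hn : 0 < n) (i r : Fin n) :
    psTime s (s i r) ≤ ∑ k ∈ Iic r, psProb s i (s i k) := by
  induction r using WellFoundedLT.induction with | _ r ih => ?_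
  have hr := sub_psArrival_le_psProb (s := s) hn i (s i r)
  rw [Iic_eq_cons_Iio, sum_cons]
  rcases psArrival_eq_zero_or i (s i r) with h0 | ⟨k, hk, hA⟩
  · linarith [sum_nonneg fun k (_ : k ∈ Iio r) => psProb_nonneg (s := s) i (s i k)]
  · rw [Equiv.symm_apply_apply] at hk
    have hsub : ∑ k' ∈ Iic ((s i).symm k), psProb s i (s i k') ≤
        ∑ k' ∈ Iio r, psProb s i (s i k') :=
      sum_le_sum_of_subset_of_nonneg (fun x hx => mem_Iio.2 ((mem_Iic.1 hx).trans_lt hk))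
        fun _ _ _ => psProb_nonneg _ _
    have := ih _ hk
    rw [Equiv.apply_symm_apply] at this
    linarith

theorem card_Iic_le_mul_sum_psProb (hn : 0 < n) (i r : Fin n) :
    ((Iic r).card : ℝ) ≤ n * ∑ k ∈ Iic r, psProb s i (s i k) := by
  obtain ⟨r', hr', hmax⟩ :=
    exists_max_image (Iic r) (fun k => psTime s (s i k)) ⟨r, mem_Iic.2 le_rfl⟩
  calc ((Iic r).card : ℝ) = ((Iic r).image (s i)).card := by
        rw [card_image_of_injective _ (s i).injective]
    _ ≤ (univ.filter fun j => psTime s j ≤ psTime s (s i r')).card := by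
        gcongr
        intro j hj
        obtain ⟨k, hk, rfl⟩ := mem_image.1 hj
        simpa using hmax k hk
    _ ≤ n * psTime s (s i r') := card_psTime_le s (psTime_pos s _).le
    _ ≤ n * ∑ k ∈ Iic r, psProb s i (s i k) := by
        gcongr
        refine (psTime_le_sum_psProb_Iic hn i r').trans ?_
        exact sum_le_sum_of_subset_of_nonneg (Iic_subset_Iic.2 (mem_Iic.1 hr'))
          fun _ _ _ => psProb_nonneg _ _

theorem mul_psTime_le_utility (hn : 0 < n) {i : Fin n} {v : Fin n → ℝ} (hv0 : ∀ j, 0 ≤ v j)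
    (hv : Antitone (v ∘ s i)) (j : Fin n) : v j * psTime s j ≤ ∑ k, psProb s i k * v k := by
  obtain ⟨r, rfl⟩ := (s i).surjective j
  rw [← Equiv.sum_comp (s i)]
  calc v (s i r) * psTime s (s i r) ≤ v (s i r) * ∑ k ∈ Iic r, psProb s i (s i k) :=
        mul_le_mul_of_nonneg_left (psTime_le_sum_psProb_Iic hn i r) (hv0 _)
    _ ≤ ∑ k ∈ Iic r, psProb s i (s i k) * v (s i k) := by
        rw [mul_sum]
        refine sum_le_sum fun k hk => ?_
        rw [mul_comm]
        exact mul_le_mul_of_nonneg_left (hv (mem_Iic.1 hk)) (psProb_nonneg _ _)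
    _ ≤ ∑ k, psProb s i (s i k) * v (s i k) :=
        sum_le_sum_of_subset_of_nonneg (subset_univ _)
          fun k _ _ => mul_nonneg (psProb_nonneg _ _) (hv0 _)

theorem sum_div_le_utility (hn : 0 < n) {i : Fin n} {v : Fin n → ℝ} (hv0 : ∀ j, 0 ≤ v j)
    (hv : Antitone (v ∘ s i)) : (∑ j, v j) / n ≤ ∑ j, psProb s i j * v j := by
  have hn' : (0 : ℝ) < n := by exact_mod_cast hn
  have hprefix : ∀ r ∈ univ, 0 ≤ ∑ k ∈ univ with k ≤ r, (psProb s i (s i k) - 1 / n) := by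
    intro r _
    rw [filter_ge_eq_Iic, sum_sub_distrib, sum_const, nsmul_eq_mul, sub_nonneg,
      ← div_eq_mul_one_div, div_le_iff₀' hn']
    exact card_Iic_le_mul_sum_psProb hn i r
  have := sum_mul_nonneg_of_antitone hv (fun r => hv0 _) univ hprefix
  simp only [Function.comp_apply, mul_sub, sum_sub_distrib, ← sum_mul,
    Equiv.sum_comp (s i) (fun j => v j * psProb s i j), Equiv.sum_comp (s i) v] at this
  rw [div_eq_mul_one_div]
  simpa [mul_comm] using this

end Eating

noncomputable def truthfulReport (v : Fin n → ℝ) : Fin n ≃ Fin n :=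
  Tuple.sort (fun j => -v j)

theorem antitone_comp_truthfulReport (v : Fin n → ℝ) : Antitone (v ∘ truthfulReport v) :=
  fun _ _ h => neg_le_neg_iff.1 (Tuple.monotone_sort (fun j => -v j) h)

theorem max_le_utility_update_truthfulReport (hn : 0 < n) (s : Fin n → (Fin n ≃ Fin n))
    (i : Fin n) {v : Fin n → ℝ} (hv : UnitSum v) (j : Fin n) :
    max (1 / (n : ℝ)) (v j * psTime s j / 2) ≤
      ∑ k, psProb (Function.update s i (truthfulReport v)) i k * v k := by
  have hmono : Antitone (v ∘ Function.update s i (truthfulReport v) i) := by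
    rw [Function.update_self]
    exact antitone_comp_truthfulReport v
  refine max_le ?_ ?_
  · simpa [hv.2] using sum_div_le_utility hn hv.1 hmono
  · have := psTime_le_two_mul_psTime_update hn s i (truthfulReport v) j
    nlinarith [mul_psTime_le_utility hn hv.1 hmono j, hv.1 j]

theorem exists_SWopt_eq (u : Fin n → Fin n → ℝ) :
    ∃ μ : Equiv.Perm (Fin n), SWopt u = ∑ i, u i (μ i) := by
  obtain ⟨μ, -, h⟩ := univ.exists_mem_eq_sup' ⟨Equiv.refl (Fin n), mem_univ _⟩
    fun μ : Equiv.Perm (Fin n) => ∑ i, u i (μ i)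
  exact ⟨μ, h⟩

noncomputable def optMatching (u : Fin n → Fin n → ℝ) : Equiv.Perm (Fin n) :=
  (exists_SWopt_eq u).choose

theorem SWopt_eq_sum_optMatching (u : Fin n → Fin n → ℝ) :
    SWopt u = ∑ i, u i (optMatching u i) :=
  (exists_SWopt_eq u).choose_spec

theorem SWopt_le_three_sqrt_mul (hn : 0 < n) {u : Fin n → Fin n → ℝ} (hu : ∀ i, UnitSum (u i))
    (s : Fin n → (Fin n ≃ Fin n)) :
    SWopt u ≤ 3 * √n * ∑ i, max (1 / (n : ℝ))
      (u i (optMatching u i) * psTime s (optMatching u i) / 2) := by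
  rw [SWopt_eq_sum_optMatching]
  refine sum_le_three_sqrt_mul_sum_max hn (fun t ht => card_psTime_lt s ht) _
    (fun i => (hu i).1 _) fun i => ?_
  rw [← (hu i).2]
  exact single_le_sum (fun j _ => (hu i).1 j) (mem_univ _)

section BayesNash

variable {S : Fin n → Finset (Fin n → ℝ)} {D : Fin n → (Fin n → ℝ) → ℝ}
  {q : Fin n → (Fin n → ℝ) → (Fin n ≃ Fin n) → ℝ}

/-- Agent `i`'s type is drawn from `S i` with weights `D i` and `q i v` is her mixed report at
type `v`; the two sides are her expected utilities conditional on her type being `v`, with and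
without the deviation to `s'`. -/
def IsBayesNash (S : Fin n → Finset (Fin n → ℝ)) (D : Fin n → (Fin n → ℝ) → ℝ)
    (q : Fin n → (Fin n → ℝ) → (Fin n ≃ Fin n) → ℝ) : Prop :=
  ∀ (i : Fin n), ∀ v ∈ S i, ∀ s' : Fin n ≃ Fin n,
    ∑ u ∈ Fintype.piFinset (Function.update S i {v}),
      (∏ m ∈ univ.erase i, D m (u m)) *
        ∑ sp : Fin n → (Fin n ≃ Fin n),
          (∏ m, q m (u m) (sp m)) * ∑ j, psProb (Function.update sp i s') i j * v j ≤
    ∑ u ∈ Fintype.piFinset (Function.update S i {v}),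
      (∏ m ∈ univ.erase i, D m (u m)) *
        ∑ sp : Fin n → (Fin n ≃ Fin n), (∏ m, q m (u m) (sp m)) * ∑ j, psProb sp i j * v j

theorem IsBayesNash.expected_le_expected_utility (hBN : IsBayesNash S D q) (hD : ∀ i v, 0 ≤ D i v)
    (hq : ∀ i, ∀ v ∈ S i, ∀ σ, 0 ≤ q i v σ) (i : Fin n) (dev : (Fin n → ℝ) → (Fin n ≃ Fin n))
    {g : (Fin n → Fin n → ℝ) → (Fin n → Fin n ≃ Fin n) → ℝ}
    (hg : ∀ u ∈ Fintype.piFinset S, ∀ sp,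
      g u sp ≤ ∑ j, psProb (Function.update sp i (dev (u i))) i j * u i j) :
    ∑ u ∈ Fintype.piFinset S, (∏ m, D m (u m)) *
        ∑ sp : Fin n → (Fin n ≃ Fin n), (∏ m, q m (u m) (sp m)) * g u sp ≤
      ∑ u ∈ Fintype.piFinset S, (∏ m, D m (u m)) *
        ∑ sp : Fin n → (Fin n ≃ Fin n), (∏ m, q m (u m) (sp m)) * ∑ j, psProb sp i j * u i j := by
  rw [sum_piFinset_prod_mul_eq S D i, sum_piFinset_prod_mul_eq S D i]
  refine sum_le_sum fun v hv => mul_le_mul_of_nonneg_left ?_ (hD i v)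
  refine le_trans ?_ ((hBN i v hv (dev v)).trans_eq (sum_congr rfl fun u hu => ?_))
  · refine sum_le_sum fun u hu => ?_
    obtain ⟨huS, rfl⟩ := mem_piFinset_of_mem_piFinset_update hv hu
    gcongr with sp
    · exact prod_nonneg fun m _ => hD m _
    · exact prod_nonneg fun m _ => hq m _ (Fintype.mem_piFinset.1 huS m) _
    · exact hg u huS sp
  · rw [(mem_piFinset_of_mem_piFinset_update hv hu).2]

/-- Roughgarden's smoothness argument; the deviation must depend only on the deviator's own type
for the equilibrium condition to apply. -/
theorem IsBayesNash.expected_SWopt_le (hBN : IsBayesNash S D q) (hD : ∀ i v, 0 ≤ D i v)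
    (hq : ∀ i, ∀ v ∈ S i, (∀ σ, 0 ≤ q i v σ) ∧ ∑ σ, q i v σ = 1) {c : ℝ} (hc : 0 ≤ c)
    (dev : (Fin n → ℝ) → (Fin n ≃ Fin n))
    (g : Fin n → (Fin n → Fin n → ℝ) → (Fin n → Fin n ≃ Fin n) → ℝ)
    (hdev : ∀ u ∈ Fintype.piFinset S, ∀ sp i,
      g i u sp ≤ ∑ j, psProb (Function.update sp i (dev (u i))) i j * u i j)
    (hopt : ∀ u ∈ Fintype.piFinset S, ∀ sp, SWopt u ≤ c * ∑ i, g i u sp) :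
    ∑ u ∈ Fintype.piFinset S, (∏ m, D m (u m)) * SWopt u ≤
      c * ∑ u ∈ Fintype.piFinset S, (∏ m, D m (u m)) *
        ∑ sp : Fin n → (Fin n ≃ Fin n), (∏ m, q m (u m) (sp m)) * psSW u sp := by
  have hQ : ∀ u ∈ Fintype.piFinset S, ∀ sp : Fin n → (Fin n ≃ Fin n),
      0 ≤ ∏ m, q m (u m) (sp m) := fun u hu sp =>
    prod_nonneg fun m _ => (hq m _ (Fintype.mem_piFinset.1 hu m)).1 _
  calc ∑ u ∈ Fintype.piFinset S, (∏ m, D m (u m)) * SWopt u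
      = ∑ u ∈ Fintype.piFinset S, (∏ m, D m (u m)) *
          ∑ sp : Fin n → (Fin n ≃ Fin n), (∏ m, q m (u m) (sp m)) * SWopt u := by
        refine sum_congr rfl fun u hu => ?_
        rw [← sum_mul, ← Fintype.prod_sum, prod_eq_one fun m _ =>
          (hq m _ (Fintype.mem_piFinset.1 hu m)).2, one_mul]
    _ ≤ ∑ u ∈ Fintype.piFinset S, (∏ m, D m (u m)) *
          ∑ sp : Fin n → (Fin n ≃ Fin n), (∏ m, q m (u m) (sp m)) * (c * ∑ i, g i u sp) := by
        gcongr with u hu sp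
        · exact prod_nonneg fun m _ => hD m _
        · exact hQ u hu sp
        · exact hopt u hu sp
    _ = c * ∑ i, ∑ u ∈ Fintype.piFinset S, (∏ m, D m (u m)) *
          ∑ sp : Fin n → (Fin n ≃ Fin n), (∏ m, q m (u m) (sp m)) * g i u sp := by
        simp only [mul_left_comm _ c, ← mul_sum]
        rw [sum_mul_sum_mul_sum_comm]
    _ ≤ c * ∑ i, ∑ u ∈ Fintype.piFinset S, (∏ m, D m (u m)) *
          ∑ sp : Fin n → (Fin n ≃ Fin n), (∏ m, q m (u m) (sp m)) * ∑ j, psProb sp i j * u i j := by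
        refine mul_le_mul_of_nonneg_left (sum_le_sum fun i _ => ?_) hc
        exact hBN.expected_le_expected_utility hD (fun i v hv => (hq i v hv).1) i dev
          fun u hu sp => hdev u hu sp i
    _ = c * ∑ u ∈ Fintype.piFinset S, (∏ m, D m (u m)) *
          ∑ sp : Fin n → (Fin n ≃ Fin n), (∏ m, q m (u m) (sp m)) * psSW u sp := by
        rw [← sum_mul_sum_mul_sum_comm]
        rfl

end BayesNash

end ProbabilisticSerial

open ProbabilisticSerial

/-- The Bayesian Price of Anarchy of Probabilistic Serial is `O(√n)`: there is a
universal constant `C > 0` such that for every `n`, every profile of independent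
finitely-supported distributions over unit-sum valuations (given by supports
`S i` and weights `D i`), and every Bayes-Nash equilibrium `q` (a behavioural
strategy mapping each valuation in the support to a distribution over
orderings), the expected equilibrium welfare is at least
`(1/(C·√n))` times the expected optimal welfare. -/
theorem ps_bayes_nash_poa_sqrt_n :
    ∃ C : ℝ, 0 < C ∧
      ∀ (n : ℕ) (S : Fin n → Finset (Fin n → ℝ)) (D : Fin n → (Fin n → ℝ) → ℝ)
        (q : Fin n → (Fin n → ℝ) → (Fin n ≃ Fin n) → ℝ),
        (∀ i v, 0 ≤ D i v) →
        (∀ i, ∑ v ∈ S i, D i v = 1) →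
        (∀ i, ∀ v ∈ S i, UnitSum v) →
        (∀ i, ∀ v ∈ S i, (∀ σ : Fin n ≃ Fin n, 0 ≤ q i v σ) ∧ ∑ σ, q i v σ = 1) →
        -- Bayes-Nash equilibrium condition
        (∀ (i : Fin n), ∀ v ∈ S i, ∀ s' : Fin n ≃ Fin n,
          ∑ u ∈ Fintype.piFinset (Function.update S i {v}),
            (∏ m ∈ Finset.univ.erase i, D m (u m)) *
              ∑ sp : Fin n → (Fin n ≃ Fin n),
                (∏ m, q m (u m) (sp m)) *
                  ∑ j, psProb (Function.update sp i s') i j * v j ≤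
          ∑ u ∈ Fintype.piFinset (Function.update S i {v}),
            (∏ m ∈ Finset.univ.erase i, D m (u m)) *
              ∑ sp : Fin n → (Fin n ≃ Fin n),
                (∏ m, q m (u m) (sp m)) * ∑ j, psProb sp i j * v j) →
        (1 / (C * Real.sqrt n)) *
            ∑ u ∈ Fintype.piFinset S, (∏ m, D m (u m)) * SWopt u ≤
          ∑ u ∈ Fintype.piFinset S,
            (∏ m, D m (u m)) *
              ∑ sp : Fin n → (Fin n ≃ Fin n), (∏ m, q m (u m) (sp m)) * psSW u sp := by
  refine ⟨3, by norm_num, fun n S D q hD _ hS hq hBN => ?_⟩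
  rcases n.eq_zero_or_pos with rfl | hn
  · simp [psSW]
  have hpoa := IsBayesNash.expected_SWopt_le hBN hD hq (by positivity) truthfulReport
    (fun i u sp => max (1 / (n : ℝ)) (u i (optMatching u i) * psTime sp (optMatching u i) / 2))
    (fun u hu sp i => max_le_utility_update_truthfulReport hn sp i
      (hS i _ (Fintype.mem_piFinset.1 hu i)) _)
    fun u hu sp => SWopt_le_three_sqrt_mul hn (fun i => hS i _ (Fintype.mem_piFinset.1 hu i)) sp
  rw [one_div_mul_eq_div, div_le_iff₀ (by positivity)]
  linarith
end
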